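/- arXiv:1910.04022 — 3 statements merged into one kernel-verified Lean document; each statement's English description precedes it below -/
import Mathlib

section
/- Let A and B be symmetric M×M matrices over a commutative ring, let C(x) = [[A, B + xI],[B + xI, A]] (2M×2M), and for S ⊆ [M] let D(S) = ([M] ∖ S) ∪ ([M+1, 2M] ∖ (S+M)). Then Σ_{S ⊆ [M]} μ⁺(C(0)_{D(S),D(S)}, z) · x^{|S|} = μ⁺(C(x), z), where μ⁺(Y, z) = Σ_{T} haf(Y_{T,T}) z^{dim(Y)−|T|}. -/
open Finset Polynomial

/-- The hafnian of an `n × n` matrix: `(1/((n/2)! 2^(n/2))) ∑_{σ} ∏_j A_{σ(2j), σ(2j+1)}`,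
taken to be `0` when `n` is odd and `1` for the empty matrix. -/
noncomputable def haf {F : Type*} [Field F] {n : ℕ} (A : Matrix (Fin n) (Fin n) F) : F :=
  if h : 2 ∣ n then
    (((n / 2).factorial * 2 ^ (n / 2) : ℕ) : F)⁻¹ *
      ∑ σ : Equiv.Perm (Fin n), ∏ j : Fin (n / 2),
        A (σ ⟨2 * j.1, by have h1 := Nat.div_mul_cancel h; have h2 := j.isLt; omega⟩)
          (σ ⟨2 * j.1 + 1, by have h1 := Nat.div_mul_cancel h; have h2 := j.isLt; omega⟩)
  else 0

/-- The principal submatrix of `A` indexed by the subset `S` of the rows/columns. -/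
def subm {F : Type*} {M : ℕ} (A : Matrix (Fin M) (Fin M) F) (S : Finset (Fin M)) :
    Matrix (Fin S.card) (Fin S.card) F :=
  fun i j => A (S.orderEmbOfFin rfl i) (S.orderEmbOfFin rfl j)

/-- The GBS polynomial `∑_{S ⊆ V} (-1)^{|S|/2} haf(A_S)² x^{M-|S|}`. -/
noncomputable def GBS {F : Type*} [Field F] {M : ℕ} (A : Matrix (Fin M) (Fin M) F) :
    Polynomial F :=
  ∑ S : Finset (Fin M),
    Polynomial.C ((-1 : F) ^ (S.card / 2) * (haf (subm A S)) ^ 2) * Polynomial.X ^ (M - S.card)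

/-- The signless GBS polynomial `∑_{S ⊆ V} haf(A_S)² x^{M-|S|}`. -/
noncomputable def GBSplus {F : Type*} [Field F] {M : ℕ} (A : Matrix (Fin M) (Fin M) F) :
    Polynomial F :=
  ∑ S : Finset (Fin M), Polynomial.C ((haf (subm A S)) ^ 2) * Polynomial.X ^ (M - S.card)

/-- The signless matching polynomial `μ⁺(A, z) = ∑_{T} haf(A_{T,T}) z^{M-|T|}`. -/
noncomputable def muPlus {F : Type*} [Field F] {M : ℕ} (A : Matrix (Fin M) (Fin M) F) :
    Polynomial F :=
  ∑ S : Finset (Fin M), Polynomial.C (haf (subm A S)) * Polynomial.X ^ (M - S.card)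

/-- The (signed) matching polynomial `μ(A, z) = ∑_{T} (-1)^{|T|/2} haf(A_{T,T}) z^{M-|T|}`. -/
noncomputable def matchPoly {F : Type*} [Field F] {M : ℕ} (A : Matrix (Fin M) (Fin M) F) :
    Polynomial F :=
  ∑ S : Finset (Fin M),
    Polynomial.C ((-1 : F) ^ (S.card / 2) * haf (subm A S)) * Polynomial.X ^ (M - S.card)

/-- The adjacency matrix `[[A, xI],[xI, A]]` of the prism `G □ P₂(x)` over the graph
with adjacency matrix `A`. -/
noncomputable def prism {F : Type*} [Field F] {M : ℕ} (A : Matrix (Fin M) (Fin M) F) (x : F) :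
    Matrix (Fin (M + M)) (Fin (M + M)) F :=
  Matrix.submatrix (Matrix.fromBlocks A (x • 1) (x • 1) A) finSumFinEquiv.symm finSumFinEquiv.symm

/-- The adjacency matrix `A₁ ⊕ A₂` of the disjoint union of two graphs. -/
def dsum {F : Type*} [Zero F] {M N : ℕ} (A : Matrix (Fin M) (Fin M) F)
    (B : Matrix (Fin N) (Fin N) F) : Matrix (Fin (M + N)) (Fin (M + N)) F :=
  Matrix.submatrix (Matrix.fromBlocks A 0 0 B) finSumFinEquiv.symm finSumFinEquiv.symm

/-- The matrix `C(x) = [[A, B + xI],[B + xI, A]]`, reindexed over `Fin (M + M)`. -/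
noncomputable def Cmat {M : ℕ} (A B : Matrix (Fin M) (Fin M) ℝ) (x : ℝ) :
    Matrix (Fin (M + M)) (Fin (M + M)) ℝ :=
  Matrix.submatrix (Matrix.fromBlocks A (B + x • 1) (B + x • 1) A)
    finSumFinEquiv.symm finSumFinEquiv.symm

/-- The subset `D(S) = ([M] ∖ S) ∪ ([M+1,2M] ∖ (S+M))` of `Fin (M + M)`. -/
def Dset {M : ℕ} (S : Finset (Fin M)) : Finset (Fin (M + M)) :=
  Sᶜ.image (fun i => finSumFinEquiv (Sum.inl i)) ∪
    Sᶜ.image (fun i => finSumFinEquiv (Sum.inr i))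


section Haf
variable {F : Type*} [Field F]

lemma haf_odd {n : ℕ} (h : ¬ 2 ∣ n) (A : Matrix (Fin n) (Fin n) F) : haf A = 0 := by
  rw [haf, dif_neg h]

lemma haf_zero (A : Matrix (Fin 0) (Fin 0) F) : haf A = 1 := by
  rw [haf, dif_pos ⟨0, rfl⟩]
  simp

lemma haf_reindex {n : ℕ} (A : Matrix (Fin n) (Fin n) F) (e : Fin n ≃ Fin n) :
    haf (A.submatrix e e) = haf A := by
  rw [haf, haf]
  by_cases h : 2 ∣ n
  · rw [dif_pos h, dif_pos h]
    congr 1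
    apply Fintype.sum_equiv ⟨fun σ => σ.trans e, fun σ => σ.trans e.symm,
      fun σ => by ext i; simp, fun σ => by ext i; simp⟩
    intro σ
    rfl
  · rw [dif_neg h, dif_neg h]

lemma haf_cast {n m : ℕ} (h : n = m) (A : Matrix (Fin m) (Fin m) F) :
    haf (A.submatrix (Fin.cast h) (Fin.cast h)) = haf A := by
  subst h; rfl

lemma haf_submatrix_range_subset {N k : ℕ} (A : Matrix (Fin N) (Fin N) F)
    {f g : Fin k → Fin N} (hf : Function.Injective f) (hg : Function.Injective g)
    (hsub : Set.range f ⊆ Set.range g) :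
    haf (A.submatrix f f) = haf (A.submatrix g g) := by
  set e : Fin k → Fin k := fun i => (Equiv.ofInjective g hg).symm ⟨f i, hsub ⟨i, rfl⟩⟩ with he
  have hge : ∀ i, g (e i) = f i := fun i => Equiv.apply_ofInjective_symm hg _
  have hei : Function.Injective e := by
    intro i j hij
    apply hf; rw [← hge i, ← hge j, hij]
  obtain ⟨eb, heb⟩ : ∃ eb : Fin k ≃ Fin k, ∀ i, eb i = e i :=
    ⟨Equiv.ofBijective e (Finite.injective_iff_bijective.mp hei), fun i => rfl⟩
  have : A.submatrix f f = (A.submatrix g g).submatrix eb eb := by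
    ext i j
    simp [Matrix.submatrix_apply, heb, hge]
  rw [this, haf_reindex]

lemma haf_subm_of_range {N k : ℕ} (A : Matrix (Fin N) (Fin N) F)
    {f : Fin k → Fin N} (hf : Function.Injective f) (T : Finset (Fin N))
    (hc : T.card = k) (hr : ∀ i, f i ∈ T) :
    haf (A.submatrix f f) = haf (subm A T) := by
  have h1 : haf (A.submatrix f f) =
      haf (A.submatrix ((T.orderEmbOfFin rfl) ∘ (Fin.cast hc.symm))
        ((T.orderEmbOfFin rfl) ∘ (Fin.cast hc.symm))) := by
    apply haf_submatrix_range_subset A hf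
    · exact ((T.orderEmbOfFin rfl).injective).comp (Fin.cast_injective _)
    · intro u hu
      obtain ⟨i, rfl⟩ := hu
      have : f i ∈ Set.range (T.orderEmbOfFin rfl) := by
        rw [Finset.range_orderEmbOfFin]; exact hr i
      obtain ⟨j, hj⟩ := this
      exact ⟨Fin.cast hc j, by simpa using hj⟩
  rw [h1]
  exact haf_cast hc.symm (subm A T)

end Haf
section HS
variable {F : Type*} [Field F]

noncomputable def hs {q : ℕ} (A : Matrix (Fin (2*q)) (Fin (2*q)) F) : F :=
  ∑ σ : Equiv.Perm (Fin (2*q)), ∏ j : Fin q,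
    A (σ ⟨2*j.1, by have := j.isLt; omega⟩) (σ ⟨2*j.1+1, by have := j.isLt; omega⟩)

lemma haf_mk {q : ℕ} (A : Matrix (Fin (2*q)) (Fin (2*q)) F) :
    haf A = ((q.factorial * 2 ^ q : ℕ) : F)⁻¹ * hs A := by
  have hd : 2 ∣ 2*q := ⟨q, rfl⟩
  have hq : (2*q)/2 = q := by omega
  rw [haf, dif_pos hd]
  congr 1
  · rw [hq]
  · rw [hs]
    apply Finset.sum_congr rfl
    intro σ _
    apply Fintype.prod_equiv (finCongr hq)
    intro j
    rfl

/-- the map describing positions `≥ 2` after two applications of `decomposeFin`. -/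
def hmap {m : ℕ} (a : Fin (m+2)) (b : Fin (m+1)) : Fin m → Fin (m+2) :=
  fun k => Equiv.swap 0 a ((Equiv.swap 0 b k.succ).succ)

lemma hmap_injective {m : ℕ} (a : Fin (m+2)) (b : Fin (m+1)) :
    Function.Injective (hmap a b) := by
  intro i j h
  unfold hmap at h
  have h1 := (Equiv.swap 0 a).injective h
  have h2 := Fin.succ_injective _ h1
  have h3 := (Equiv.swap 0 b).injective h2
  exact Fin.succ_injective _ h3

lemma hmap_ne_fst {m : ℕ} (a : Fin (m+2)) (b : Fin (m+1)) (k : Fin m) :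
    hmap a b k ≠ a := by
  intro h
  have h' : (Equiv.swap 0 a) ((Equiv.swap 0 b k.succ).succ) = Equiv.swap 0 a 0 := by
    rw [Equiv.swap_apply_left]; exact h
  exact Fin.succ_ne_zero _ ((Equiv.swap 0 a).injective h')

lemma hmap_ne_snd {m : ℕ} (a : Fin (m+2)) (b : Fin (m+1)) (k : Fin m) :
    hmap a b k ≠ Equiv.swap 0 a b.succ := by
  intro h
  have h1 : ((Equiv.swap 0 b k.succ).succ : Fin (m+2)) = b.succ := (Equiv.swap 0 a).injective h
  have h2 : (Equiv.swap 0 b) k.succ = Equiv.swap 0 b 0 := by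
    rw [Equiv.swap_apply_left]; exact Fin.succ_injective _ h1
  exact Fin.succ_ne_zero _ ((Equiv.swap 0 b).injective h2)

lemma swap_succ_ne {m : ℕ} (a : Fin (m+2)) (b : Fin (m+1)) :
    Equiv.swap 0 a b.succ ≠ a := by
  intro h
  have h' : (Equiv.swap 0 a) b.succ = Equiv.swap 0 a 0 := by
    rw [Equiv.swap_apply_left]; exact h
  exact Fin.succ_ne_zero _ ((Equiv.swap 0 a).injective h')

lemma perm_sum_decompose {n : ℕ} {M : Type*} [AddCommMonoid M]
    (f : Equiv.Perm (Fin (n+1)) → M) :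
    ∑ σ, f σ = ∑ a : Fin (n+1), ∑ τ : Equiv.Perm (Fin n),
      f (Equiv.Perm.decomposeFin.symm (a, τ)) := by
  rw [← Equiv.Perm.decomposeFin.symm.sum_comp, Fintype.sum_prod_type]

lemma hs_succ {q : ℕ} (A : Matrix (Fin (2*(q+1))) (Fin (2*(q+1))) F) :
    hs A = ∑ a : Fin (2*q+2), ∑ b : Fin (2*q+1),
      A a (Equiv.swap 0 a b.succ) * hs (A.submatrix (hmap a b) (hmap a b)) := by
  rw [hs]
  show (∑ σ : Equiv.Perm (Fin (2*q+1+1)), ∏ j : Fin (q+1),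
      A (σ ⟨2*j.1, by have := j.isLt; omega⟩) (σ ⟨2*j.1+1, by have := j.isLt; omega⟩)) = _
  rw [perm_sum_decompose]
  apply Finset.sum_congr rfl
  intro a _
  rw [perm_sum_decompose]
  apply Finset.sum_congr rfl
  intro b _
  rw [hs, Finset.mul_sum]
  apply Finset.sum_congr rfl
  intro τ _
  rw [Fin.prod_univ_succ]
  congr 1
  · have h0 : (⟨2 * (0 : Fin (q+1)).1, by omega⟩ : Fin (2*q+1+1)) = 0 := by
      apply Fin.ext; simp
    have h1 : (⟨2 * (0 : Fin (q+1)).1 + 1, by omega⟩ : Fin (2*q+1+1)) =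
        Fin.succ (0 : Fin (2*q+1)) := by
      apply Fin.ext; simp
    rw [h0, h1, Equiv.Perm.decomposeFin_symm_apply_zero,
      Equiv.Perm.decomposeFin_symm_apply_succ, Equiv.Perm.decomposeFin_symm_apply_zero]
  · apply Finset.prod_congr rfl
    intro i _
    have h2 : (⟨2 * (Fin.succ i).1, by have := i.isLt; omega⟩ : Fin (2*q+1+1))
        = Fin.succ (Fin.succ (⟨2 * i.1, by have := i.isLt; omega⟩ : Fin (2*q))) := by
      apply Fin.ext; simp [Fin.val_succ]; omega
    have h3 : (⟨2 * (Fin.succ i).1 + 1, by have := i.isLt; omega⟩ : Fin (2*q+1+1))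
        = Fin.succ (Fin.succ (⟨2 * i.1 + 1, by have := i.isLt; omega⟩ : Fin (2*q))) := by
      apply Fin.ext; simp [Fin.val_succ]; omega
    rw [h2, h3]
    rw [Equiv.Perm.decomposeFin_symm_apply_succ, Equiv.Perm.decomposeFin_symm_apply_succ,
      Equiv.Perm.decomposeFin_symm_apply_succ, Equiv.Perm.decomposeFin_symm_apply_succ]
    rfl

end HS
section Laplace

lemma sum_swap_succ {m : ℕ} (a : Fin (m+2)) (G : Fin (m+2) → ℝ) :
    ∑ b : Fin (m+1), G (Equiv.swap 0 a b.succ) = ∑ c ∈ Finset.univ.erase a, G c := by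
  apply Finset.sum_bij (fun b _ => Equiv.swap 0 a b.succ)
  · intro b _
    exact Finset.mem_erase.mpr ⟨swap_succ_ne a b, Finset.mem_univ _⟩
  · intro b _ b' _ h
    exact Fin.succ_injective _ ((Equiv.swap 0 a).injective h)
  · intro c hc
    have hca : c ≠ a := (Finset.mem_erase.mp hc).1
    have hd : Equiv.swap 0 a c ≠ 0 := by
      intro h
      apply hca
      have := congrArg (Equiv.swap 0 a) h
      rwa [Equiv.swap_apply_self, Equiv.swap_apply_left] at this
    refine ⟨(Equiv.swap 0 a c).pred hd, Finset.mem_univ _, ?_⟩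
    rw [Fin.succ_pred, Equiv.swap_apply_self]
  · intro b _
    rfl

lemma sum_pairs_reindex {N m : ℕ} (f : Fin m → Fin N) (hf : Function.Injective f)
    (U : Finset (Fin N)) (hfm : ∀ i, f i ∈ U) (hc : U.card = m)
    (H : Fin N → Fin N → ℝ) :
    ∑ a : Fin m, ∑ c ∈ Finset.univ.erase a, H (f a) (f c)
      = ∑ u ∈ U, ∑ v ∈ U.erase u, H u v := by
  have hsurj : ∀ u ∈ U, ∃ a, f a = u := by
    intro u hu
    have himg : Finset.univ.image f = U := by
      apply Finset.eq_of_subset_of_card_le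
      · intro w hw
        obtain ⟨i, _, rfl⟩ := Finset.mem_image.mp hw
        exact hfm i
      · rw [Finset.card_image_of_injective _ hf, hc, Finset.card_univ, Fintype.card_fin]
    rw [← himg] at hu
    obtain ⟨a, _, ha⟩ := Finset.mem_image.mp hu
    exact ⟨a, ha⟩
  apply Finset.sum_bij (fun a _ => f a)
  · intro a _; exact hfm a
  · intro a _ a' _ h; exact hf h
  · intro u hu
    obtain ⟨a, ha⟩ := hsurj u hu
    exact ⟨a, Finset.mem_univ _, ha⟩
  · intro a _
    apply Finset.sum_bij (fun c (_ : c ∈ Finset.univ.erase a) => f c)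
    · intro c hcm
      exact Finset.mem_erase.mpr ⟨fun h => (Finset.mem_erase.mp hcm).1 (hf h), hfm c⟩
    · intro c _ c' _ h; exact hf h
    · intro v hv
      obtain ⟨c, hcv⟩ := hsurj v (Finset.mem_of_mem_erase hv)
      refine ⟨c, Finset.mem_erase.mpr ⟨fun h => ?_, Finset.mem_univ _⟩, hcv⟩
      exact (Finset.mem_erase.mp hv).1 (by rw [← hcv, h])
    · intro c _; rfl

set_option maxHeartbeats 1000000 in
lemma laplace_set {N : ℕ} (A : Matrix (Fin N) (Fin N) ℝ) (U : Finset (Fin N)) :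
    ∑ u ∈ U, ∑ v ∈ U.erase u, A u v * haf (subm A ((U.erase u).erase v))
      = (U.card : ℝ) * haf (subm A U) := by
  by_cases hodd : 2 ∣ U.card
  · obtain ⟨p, hp⟩ := hodd
    match p, hp with
    | 0, hp =>
      have hU : U = ∅ := Finset.card_eq_zero.mp (by omega)
      subst hU
      simp
    | q+1, hc =>
      -- the order embedding of U, recast to `Fin (2*(q+1))`
      set f : Fin (2*(q+1)) → Fin N :=
        fun i => U.orderEmbOfFin rfl (Fin.cast hc.symm i) with hfdef
      have hf : Function.Injective f :=
        (U.orderEmbOfFin rfl).injective.comp (Fin.cast_injective _)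
      have hfm : ∀ i, f i ∈ U := fun i => Finset.orderEmbOfFin_mem U rfl _
      have hsubmU : haf (subm A U) = haf (A.submatrix f f) :=
        (haf_subm_of_range A hf U hc hfm).symm
      -- rewrite minors
      have hminor : ∀ (a : Fin (2*q+2)) (b : Fin (2*q+1)),
          hs ((A.submatrix f f).submatrix (hmap a b) (hmap a b))
            = ((q.factorial * 2^q : ℕ) : ℝ) *
              haf (subm A ((U.erase (f a)).erase (f (Equiv.swap 0 a b.succ)))) := by
        intro a b
        have hg : Function.Injective (f ∘ hmap a b) := hf.comp (hmap_injective a b)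
        have hva : f (Equiv.swap 0 a b.succ) ∈ U.erase (f a) :=
          Finset.mem_erase.mpr ⟨fun h => swap_succ_ne a b (hf h), hfm _⟩
        have hcard : ((U.erase (f a)).erase (f (Equiv.swap 0 a b.succ))).card = 2*q := by
          rw [Finset.card_erase_of_mem hva, Finset.card_erase_of_mem (hfm a), hc]
          omega
        have hmem : ∀ k, (f ∘ hmap a b) k ∈
            (U.erase (f a)).erase (f (Equiv.swap 0 a b.succ)) := by
          intro k
          refine Finset.mem_erase.mpr ⟨fun h => hmap_ne_snd a b k (hf h),
            Finset.mem_erase.mpr ⟨fun h => hmap_ne_fst a b k (hf h), hfm _⟩⟩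
        have h1 : (A.submatrix f f).submatrix (hmap a b) (hmap a b)
            = A.submatrix (f ∘ hmap a b) (f ∘ hmap a b) := rfl
        have h2 : haf (A.submatrix (f ∘ hmap a b) (f ∘ hmap a b))
            = ((q.factorial * 2^q : ℕ) : ℝ)⁻¹ *
              hs (A.submatrix (f ∘ hmap a b) (f ∘ hmap a b)) := haf_mk _
        have h3 : haf (A.submatrix (f ∘ hmap a b) (f ∘ hmap a b))
            = haf (subm A ((U.erase (f a)).erase (f (Equiv.swap 0 a b.succ)))) :=
          haf_subm_of_range A hg _ hcard hmem
        rw [h1, ← h3, h2]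
        have hne : ((q.factorial * 2^q : ℕ) : ℝ) ≠ 0 := by positivity
        field_simp
      -- main computation
      have hmain : hs (A.submatrix f f)
          = ((q.factorial * 2^q : ℕ) : ℝ) *
            ∑ u ∈ U, ∑ v ∈ U.erase u, A u v * haf (subm A ((U.erase u).erase v)) := by
        rw [hs_succ]
        have step1 : ∀ a : Fin (2*q+2),
            (∑ b : Fin (2*q+1), (A.submatrix f f) a (Equiv.swap 0 a b.succ) *
              hs ((A.submatrix f f).submatrix (hmap a b) (hmap a b)))
            = ∑ c ∈ Finset.univ.erase a,
                A (f a) (f c) * (((q.factorial * 2^q : ℕ) : ℝ) *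
                  haf (subm A ((U.erase (f a)).erase (f c)))) := by
          intro a
          rw [← sum_swap_succ a (fun c => A (f a) (f c) * (((q.factorial * 2^q : ℕ) : ℝ) *
            haf (subm A ((U.erase (f a)).erase (f c)))))]
          apply Finset.sum_congr rfl
          intro b _
          rw [hminor a b]
          rfl
        calc ∑ a : Fin (2*q+2), ∑ b : Fin (2*q+1),
              (A.submatrix f f) a (Equiv.swap 0 a b.succ) *
                hs ((A.submatrix f f).submatrix (hmap a b) (hmap a b))
            = ∑ a : Fin (2*q+2), ∑ c ∈ Finset.univ.erase a,
                A (f a) (f c) * (((q.factorial * 2^q : ℕ) : ℝ) *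
                  haf (subm A ((U.erase (f a)).erase (f c)))) :=
              Finset.sum_congr rfl (fun a _ => step1 a)
          _ = ∑ u ∈ U, ∑ v ∈ U.erase u,
                A u v * (((q.factorial * 2^q : ℕ) : ℝ) * haf (subm A ((U.erase u).erase v))) :=
              sum_pairs_reindex (N := N) (m := 2*q+2) f hf U hfm (by omega)
                (fun u v => A u v * (((q.factorial * 2^q : ℕ) : ℝ) *
                  haf (subm A ((U.erase u).erase v))))
          _ = ((q.factorial * 2^q : ℕ) : ℝ) *
                ∑ u ∈ U, ∑ v ∈ U.erase u, A u v * haf (subm A ((U.erase u).erase v)) := by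
              rw [Finset.mul_sum]
              apply Finset.sum_congr rfl
              intro u _
              rw [Finset.mul_sum]
              apply Finset.sum_congr rfl
              intro v _
              ring
      have hH : haf (subm A U) = (((q+1).factorial * 2^(q+1) : ℕ) : ℝ)⁻¹ *
          (((q.factorial * 2^q : ℕ) : ℝ) *
            ∑ u ∈ U, ∑ v ∈ U.erase u, A u v * haf (subm A ((U.erase u).erase v))) := by
        rw [hsubmU, haf_mk, hmain]
      rw [hH, hc]
      have hfac : (((q+1).factorial * 2^(q+1) : ℕ) : ℝ)
          = ((2*(q+1) : ℕ) : ℝ) * ((q.factorial * 2^q : ℕ) : ℝ) := by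
        rw [← Nat.cast_mul]
        congr 1
        rw [Nat.factorial_succ]
        ring
      rw [hfac]
      have h1 : ((2*(q+1) : ℕ) : ℝ) ≠ 0 := by positivity
      have h2 : ((q.factorial * 2^q : ℕ) : ℝ) ≠ 0 := by positivity
      field_simp
  · have hU : haf (subm A U) = 0 := haf_odd (by simpa using hodd) _
    rw [hU, mul_zero]
    apply Finset.sum_eq_zero
    intro u hu
    apply Finset.sum_eq_zero
    intro v hv
    have hcd : ((U.erase u).erase v).card = U.card - 2 := by
      rw [Finset.card_erase_of_mem hv, Finset.card_erase_of_mem hu]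
      omega
    have hge : 2 ≤ U.card := by
      have := Finset.card_erase_of_mem hu
      have h1 : 0 < (U.erase u).card := Finset.card_pos.mpr ⟨v, hv⟩
      omega
    have : haf (subm A ((U.erase u).erase v)) = 0 := by
      apply haf_odd
      rw [hcd]
      omega
    rw [this, mul_zero]

end Laplace
section Pairs
variable {M : ℕ}

def el {M : ℕ} (i : Fin M) : Fin (M+M) := finSumFinEquiv (Sum.inl i)
def er {M : ℕ} (i : Fin M) : Fin (M+M) := finSumFinEquiv (Sum.inr i)

/-- `pairsF S` is the "rung" set `S ∪ (S + M)` inside `Fin (M+M)`. -/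
def pairsF {M : ℕ} (S : Finset (Fin M)) : Finset (Fin (M+M)) := S.image el ∪ S.image er

lemma el_injective : Function.Injective (el (M := M)) :=
  finSumFinEquiv.injective.comp Sum.inl_injective

lemma er_injective : Function.Injective (er (M := M)) :=
  finSumFinEquiv.injective.comp Sum.inr_injective

lemma el_ne_er (i j : Fin M) : el i ≠ er j := by
  intro h
  exact Sum.inl_ne_inr (finSumFinEquiv.injective h)

lemma rep_cases (u : Fin (M+M)) : (∃ i, u = el i) ∨ (∃ i, u = er i) := by
  rcases h : finSumFinEquiv.symm u with i | i
  · left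
    exact ⟨i, by rw [← Equiv.apply_symm_apply finSumFinEquiv u, h]; rfl⟩
  · right
    exact ⟨i, by rw [← Equiv.apply_symm_apply finSumFinEquiv u, h]; rfl⟩

lemma mem_pairsF {S : Finset (Fin M)} {u : Fin (M+M)} :
    u ∈ pairsF S ↔ (∃ i ∈ S, u = el i) ∨ (∃ i ∈ S, u = er i) := by
  simp [pairsF, Finset.mem_union, Finset.mem_image, eq_comm]

lemma el_mem_pairsF {S : Finset (Fin M)} {i : Fin M} : el i ∈ pairsF S ↔ i ∈ S := by
  rw [mem_pairsF]
  constructor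
  · rintro (⟨j, hj, hji⟩ | ⟨j, hj, hji⟩)
    · rw [el_injective hji]; exact hj
    · exact absurd hji (el_ne_er _ _)
  · intro h; exact Or.inl ⟨i, h, rfl⟩

lemma er_mem_pairsF {S : Finset (Fin M)} {i : Fin M} : er i ∈ pairsF S ↔ i ∈ S := by
  rw [mem_pairsF]
  constructor
  · rintro (⟨j, hj, hji⟩ | ⟨j, hj, hji⟩)
    · exact absurd hji.symm (el_ne_er _ _)
    · rw [er_injective hji]; exact hj
  · intro h; exact Or.inr ⟨i, h, rfl⟩

lemma card_pairsF (S : Finset (Fin M)) : (pairsF S).card = 2 * S.card := by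
  rw [pairsF, Finset.card_union_of_disjoint, Finset.card_image_of_injective _ el_injective,
    Finset.card_image_of_injective _ er_injective]
  · ring
  · rw [Finset.disjoint_left]
    rintro u hu hu'
    obtain ⟨i, _, rfl⟩ := Finset.mem_image.mp hu
    obtain ⟨j, _, hj⟩ := Finset.mem_image.mp hu'
    exact el_ne_er i j hj.symm

lemma Dset_eq_compl (S : Finset (Fin M)) : Dset S = (pairsF S)ᶜ := by
  ext u
  rcases rep_cases u with ⟨i, rfl⟩ | ⟨i, rfl⟩
  · simp only [Finset.mem_compl, el_mem_pairsF, Dset]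
    simp only [Finset.mem_union, Finset.mem_image, Finset.mem_compl]
    constructor
    · rintro (⟨j, hj, hji⟩ | ⟨j, hj, hji⟩)
      · rw [← el_injective hji]; exact hj
      · exact absurd hji.symm (el_ne_er _ _)
    · intro h; exact Or.inl ⟨i, h, rfl⟩
  · simp only [Finset.mem_compl, er_mem_pairsF, Dset]
    simp only [Finset.mem_union, Finset.mem_image, Finset.mem_compl]
    constructor
    · rintro (⟨j, hj, hji⟩ | ⟨j, hj, hji⟩)
      · exact absurd hji (el_ne_er _ _)
      · rw [← er_injective hji]; exact hj
    · intro h; exact Or.inr ⟨i, h, rfl⟩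

lemma card_Dset (S : Finset (Fin M)) : (Dset S).card = (M+M) - 2 * S.card := by
  rw [Dset_eq_compl, Finset.card_compl, card_pairsF, Fintype.card_fin]

lemma pairsF_singleton (i : Fin M) : pairsF {i} = {el i, er i} := by
  rw [pairsF]
  simp [Finset.image_singleton]

lemma pairsF_insert (i : Fin M) (S : Finset (Fin M)) :
    pairsF (insert i S) = pairsF {i} ∪ pairsF S := by
  simp only [pairsF, Finset.image_insert, Finset.image_singleton]
  ext u
  simp only [Finset.mem_union, Finset.mem_insert, Finset.mem_singleton]
  tauto

def flipv {M : ℕ} (u : Fin (M+M)) : Fin (M+M) :=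
  finSumFinEquiv (Sum.swap (finSumFinEquiv.symm u))

lemma flip_el (i : Fin M) : flipv (el i) = er i := by
  unfold flipv el er
  rw [Equiv.symm_apply_apply]
  rfl

lemma flip_er (i : Fin M) : flipv (er i) = el i := by
  unfold flipv el er
  rw [Equiv.symm_apply_apply]
  rfl

lemma flip_ne (u : Fin (M+M)) : flipv u ≠ u := by
  rcases rep_cases u with ⟨i, rfl⟩ | ⟨i, rfl⟩
  · rw [flip_el]; exact (el_ne_er i i).symm
  · rw [flip_er]; exact el_ne_er i i

lemma Cmat_apply {M : ℕ} (A B : Matrix (Fin M) (Fin M) ℝ) (x : ℝ) (u v : Fin (M+M)) :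
    Cmat A B x u v = Cmat A B 0 u v + (if v = flipv u then x else 0) := by
  rcases rep_cases u with ⟨i, rfl⟩ | ⟨i, rfl⟩ <;> rcases rep_cases v with ⟨j, rfl⟩ | ⟨j, rfl⟩
  · rw [flip_el, if_neg (el_ne_er j i)]
    simp only [Cmat, Matrix.submatrix_apply, el, Equiv.symm_apply_apply,
      Matrix.fromBlocks_apply₁₁]
    rw [add_zero]
  · rw [flip_el]
    simp only [Cmat, Matrix.submatrix_apply, el, er, Equiv.symm_apply_apply,
      Matrix.fromBlocks_apply₁₂, Matrix.add_apply, Matrix.smul_apply, Matrix.one_apply,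
      smul_eq_mul, Equiv.apply_eq_iff_eq, Sum.inr.injEq]
    rcases eq_or_ne i j with rfl | hne
    · simp
    · rw [if_neg hne, if_neg (Ne.symm hne)]
      ring
  · rw [flip_er]
    simp only [Cmat, Matrix.submatrix_apply, el, er, Equiv.symm_apply_apply,
      Matrix.fromBlocks_apply₂₁, Matrix.add_apply, Matrix.smul_apply, Matrix.one_apply,
      smul_eq_mul, Equiv.apply_eq_iff_eq, Sum.inl.injEq]
    rcases eq_or_ne i j with rfl | hne
    · simp
    · rw [if_neg hne, if_neg (Ne.symm hne)]
      ring
  · rw [flip_er, if_neg ((el_ne_er i j).symm)]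
    simp only [Cmat, Matrix.submatrix_apply, er, Equiv.symm_apply_apply,
      Matrix.fromBlocks_apply₂₂]
    rw [add_zero]

end Pairs
section KeyHelpers

lemma erase_erase_sdiff {α : Type*} [DecidableEq α] (T P : Finset α) (u v : α) :
    ((T \ P).erase u).erase v = ((T.erase u).erase v) \ P := by
  ext w
  simp only [Finset.mem_sdiff, Finset.mem_erase]
  tauto

lemma sdiff_sdiff_union' {α : Type*} [DecidableEq α] (T P Q : Finset α) :
    (T \ P) \ Q = T \ (P ∪ Q) := by
  ext w
  simp only [Finset.mem_sdiff, Finset.mem_union]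
  tauto

lemma sum_insert_bij {α : Type*} [DecidableEq α] [Fintype α] (i : α) (φ ψ : Finset α → ℝ)
    (h1 : ∀ S, i ∈ S → φ S = 0) (h2 : ∀ S, i ∉ S → ψ S = 0)
    (h3 : ∀ S, i ∉ S → φ S = ψ (insert i S)) :
    ∑ S : Finset α, φ S = ∑ S : Finset α, ψ S := by
  have e1 : ∑ S : Finset α, φ S = ∑ S ∈ Finset.univ.filter (fun S => i ∉ S), φ S := by
    refine (Finset.sum_subset (Finset.filter_subset _ _) ?_).symm
    intro S _ hS
    exact h1 S (by simpa using hS)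
  have e2 : ∑ S : Finset α, ψ S = ∑ S ∈ Finset.univ.filter (fun S => i ∈ S), ψ S := by
    refine (Finset.sum_subset (Finset.filter_subset _ _) ?_).symm
    intro S _ hS
    exact h2 S (by simpa using hS)
  rw [e1, e2]
  apply Finset.sum_nbij' (i := fun S => insert i S) (j := fun S => S.erase i)
  · intro S hS
    simp only [Finset.mem_filter, Finset.mem_univ, true_and] at hS ⊢
    exact Finset.mem_insert_self i S
  · intro S hS
    simp only [Finset.mem_filter, Finset.mem_univ, true_and] at hS ⊢
    exact Finset.notMem_erase i S
  · intro S hS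
    simp only [Finset.mem_filter, Finset.mem_univ, true_and] at hS
    exact Finset.erase_insert hS
  · intro S hS
    simp only [Finset.mem_filter, Finset.mem_univ, true_and] at hS
    exact Finset.insert_erase hS
  · intro S hS
    simp only [Finset.mem_filter, Finset.mem_univ, true_and] at hS
    exact h3 S hS

lemma claim1 {M : ℕ} (C0 : Matrix (Fin (M+M)) (Fin (M+M)) ℝ) (T : Finset (Fin (M+M)))
    (x : ℝ) (S : Finset (Fin M)) :
    ∑ u ∈ T, ∑ v ∈ T.erase u, C0 u v *
        (if pairsF S ⊆ (T.erase u).erase v then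
          x ^ S.card * haf (subm C0 (((T.erase u).erase v) \ pairsF S)) else 0)
      = (((T \ pairsF S).card : ℕ) : ℝ) *
        (if pairsF S ⊆ T then x ^ S.card * haf (subm C0 (T \ pairsF S)) else 0) := by
  by_cases hPS : pairsF S ⊆ T
  · rw [if_pos hPS]
    have e1 : ∀ u ∈ T, u ∉ T \ pairsF S →
        (∑ v ∈ T.erase u, C0 u v *
          (if pairsF S ⊆ (T.erase u).erase v then
            x ^ S.card * haf (subm C0 (((T.erase u).erase v) \ pairsF S)) else 0)) = 0 := by
      intro u hu hu'
      have hup : u ∈ pairsF S := by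
        simp only [Finset.mem_sdiff, hu, true_and, not_not] at hu'
        exact hu'
      apply Finset.sum_eq_zero
      intro v _
      rw [if_neg, mul_zero]
      intro hss
      have := hss hup
      simp only [Finset.mem_erase] at this
      exact this.2.1 rfl
    rw [← Finset.sum_subset (Finset.sdiff_subset) e1]
    have e2 : ∀ u ∈ T \ pairsF S,
        (∑ v ∈ T.erase u, C0 u v *
          (if pairsF S ⊆ (T.erase u).erase v then
            x ^ S.card * haf (subm C0 (((T.erase u).erase v) \ pairsF S)) else 0))
        = ∑ v ∈ (T \ pairsF S).erase u,
            C0 u v * (x ^ S.card *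
              haf (subm C0 ((((T \ pairsF S)).erase u).erase v))) := by
      intro u hu
      have husub : (T \ pairsF S).erase u ⊆ T.erase u := by
        intro w hw
        simp only [Finset.mem_erase, Finset.mem_sdiff] at hw ⊢
        exact ⟨hw.1, hw.2.1⟩
      have hvan : ∀ v ∈ T.erase u, v ∉ (T \ pairsF S).erase u →
          C0 u v * (if pairsF S ⊆ (T.erase u).erase v then
            x ^ S.card * haf (subm C0 (((T.erase u).erase v) \ pairsF S)) else 0) = 0 := by
        intro v hv hv'
        have hvp : v ∈ pairsF S := by
          simp only [Finset.mem_erase] at hv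
          simp only [Finset.mem_erase, Finset.mem_sdiff, not_and, not_not] at hv'
          exact hv' hv.1 hv.2
        rw [if_neg, mul_zero]
        intro hss
        have := hss hvp
        simp only [Finset.mem_erase] at this
        exact this.1 rfl
      rw [← Finset.sum_subset husub hvan]
      apply Finset.sum_congr rfl
      intro v hv
      have humem : u ∈ T \ pairsF S := hu
      have hvmem : v ∈ T \ pairsF S := Finset.mem_of_mem_erase hv
      have hcond : pairsF S ⊆ (T.erase u).erase v := by
        intro w hw
        simp only [Finset.mem_erase]
        refine ⟨fun h => ?_, fun h => ?_, hPS hw⟩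
        · subst h
          exact ((Finset.mem_sdiff.mp hvmem).2) hw
        · subst h
          exact ((Finset.mem_sdiff.mp humem).2) hw
      rw [if_pos hcond, erase_erase_sdiff]
    rw [Finset.sum_congr rfl e2]
    have e3 : ∀ u ∈ T \ pairsF S,
        ∑ v ∈ (T \ pairsF S).erase u,
          C0 u v * (x ^ S.card * haf (subm C0 ((((T \ pairsF S)).erase u).erase v)))
        = x ^ S.card * ∑ v ∈ (T \ pairsF S).erase u,
            C0 u v * haf (subm C0 ((((T \ pairsF S)).erase u).erase v)) := by
      intro u _
      rw [Finset.mul_sum]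
      apply Finset.sum_congr rfl
      intro v _
      ring
    rw [Finset.sum_congr rfl e3, ← Finset.mul_sum, laplace_set]
    ring
  · rw [if_neg hPS, mul_zero]
    apply Finset.sum_eq_zero
    intro u hu
    apply Finset.sum_eq_zero
    intro v hv
    rw [if_neg, mul_zero]
    intro hss
    apply hPS
    intro w hw
    have := hss hw
    simp only [Finset.mem_erase] at this
    exact this.2.2

end KeyHelpers
section Claim2

lemma erase_erase_pair {α : Type*} [DecidableEq α] (T : Finset α) (a b : α) :
    (T.erase a).erase b = T \ {a, b} := by
  ext w
  simp only [Finset.mem_erase, Finset.mem_sdiff, Finset.mem_insert, Finset.mem_singleton]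
  tauto

/-- per-index reparametrization inside `claim2` -/
lemma claim2_per_index {M : ℕ} (C0 : Matrix (Fin (M+M)) (Fin (M+M)) ℝ)
    (T : Finset (Fin (M+M))) (x : ℝ) (i : Fin M)
    (hi : el i ∈ T ∧ er i ∈ T) :
    x * ∑ S : Finset (Fin M),
        (if pairsF S ⊆ T \ pairsF {i} then
          x ^ S.card * haf (subm C0 ((T \ pairsF {i}) \ pairsF S)) else 0)
      = ∑ S : Finset (Fin M),
          (if i ∈ S ∧ pairsF S ⊆ T then
            x ^ S.card * haf (subm C0 (T \ pairsF S)) else 0) := by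
  rw [Finset.mul_sum]
  apply sum_insert_bij i
  · -- i ∈ S ⇒ LHS summand = 0
    intro S hS
    rw [if_neg, mul_zero]
    intro hss
    have h1 : el i ∈ pairsF S := el_mem_pairsF.mpr hS
    have h2 := hss h1
    simp only [Finset.mem_sdiff] at h2
    exact h2.2 (el_mem_pairsF.mpr (Finset.mem_singleton_self i))
  · -- i ∉ S ⇒ RHS summand = 0
    intro S hS
    rw [if_neg]
    intro h
    exact hS h.1
  · -- matching
    intro S hS
    by_cases hss : pairsF S ⊆ T \ pairsF {i}
    · rw [if_pos hss, if_pos]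
      · have hset : (T \ pairsF {i}) \ pairsF S = T \ pairsF (insert i S) := by
          rw [sdiff_sdiff_union', pairsF_insert]
        have hcard : (insert i S).card = S.card + 1 := Finset.card_insert_of_notMem hS
        rw [hset, hcard, pow_succ]
        ring
      · constructor
        · exact Finset.mem_insert_self i S
        · rw [pairsF_insert]
          apply Finset.union_subset
          · rw [pairsF_singleton]
            intro w hw
            simp only [Finset.mem_insert, Finset.mem_singleton] at hw
            rcases hw with rfl | rfl
            · exact hi.1
            · exact hi.2
          · exact hss.trans (Finset.sdiff_subset)
    · rw [if_neg hss, mul_zero, if_neg]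
      rintro ⟨-, hsub⟩
      apply hss
      intro w hw
      have hw' : w ∈ pairsF (insert i S) := by
        rw [pairsF_insert]
        exact Finset.mem_union_right _ hw
      refine Finset.mem_sdiff.mpr ⟨hsub hw', ?_⟩
      rw [pairsF_singleton]
      simp only [Finset.mem_insert, Finset.mem_singleton]
      rintro (rfl | rfl)
      · exact hS (el_mem_pairsF.mp hw)
      · exact hS (er_mem_pairsF.mp hw)

lemma claim2 {M : ℕ} (C0 : Matrix (Fin (M+M)) (Fin (M+M)) ℝ) (T : Finset (Fin (M+M)))
    (x : ℝ) :
    ∑ u ∈ T, (if flipv u ∈ T then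
        x * ∑ S : Finset (Fin M),
          (if pairsF S ⊆ (T.erase u).erase (flipv u) then
            x ^ S.card * haf (subm C0 (((T.erase u).erase (flipv u)) \ pairsF S)) else 0)
      else 0)
    = ∑ S : Finset (Fin M), (2 * S.card : ℝ) *
        (if pairsF S ⊆ T then x ^ S.card * haf (subm C0 (T \ pairsF S)) else 0) := by
  classical
  set R : Finset (Fin M) := Finset.univ.filter (fun i => el i ∈ T ∧ er i ∈ T) with hR
  -- convert the u-sum to a sum over pairsF R
  rw [← Finset.sum_filter]
  have hfil : T.filter (fun u => flipv u ∈ T) = pairsF R := by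
    ext u
    rcases rep_cases u with ⟨i, rfl⟩ | ⟨i, rfl⟩
    · rw [Finset.mem_filter, flip_el, el_mem_pairsF, hR, Finset.mem_filter]
      simp
    · rw [Finset.mem_filter, flip_er, er_mem_pairsF, hR, Finset.mem_filter]
      simp
      tauto
  rw [hfil]
  have hdisj : Disjoint (R.image el) (R.image er) := by
    rw [Finset.disjoint_left]
    rintro u hu hu'
    obtain ⟨a, _, rfl⟩ := Finset.mem_image.mp hu
    obtain ⟨b, _, hb⟩ := Finset.mem_image.mp hu'
    exact el_ne_er a b hb.symm
  rw [pairsF, Finset.sum_union hdisj,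
    Finset.sum_image (fun a _ b _ h => el_injective h),
    Finset.sum_image (fun a _ b _ h => er_injective h)]
  have hEl : ∀ i ∈ R, (T.erase (el i)).erase (flipv (el i)) = T \ pairsF {i} := by
    intro i _
    rw [flip_el, erase_erase_pair, pairsF_singleton]
  have hEr : ∀ i ∈ R, (T.erase (er i)).erase (flipv (er i)) = T \ pairsF {i} := by
    intro i _
    rw [flip_er, erase_erase_pair, pairsF_singleton, Finset.pair_comm]
  have hK : ∀ i ∈ R, ∀ W, W = T \ pairsF {i} →
      x * ∑ S : Finset (Fin M),
        (if pairsF S ⊆ W then x ^ S.card * haf (subm C0 (W \ pairsF S)) else 0)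
      = ∑ S : Finset (Fin M),
          (if i ∈ S ∧ pairsF S ⊆ T then
            x ^ S.card * haf (subm C0 (T \ pairsF S)) else 0) := by
    intro i hiR W hW
    subst hW
    apply claim2_per_index
    rw [hR] at hiR
    simpa using hiR
  have h1 : ∀ i ∈ R,
      x * ∑ S : Finset (Fin M),
        (if pairsF S ⊆ (T.erase (el i)).erase (flipv (el i)) then
          x ^ S.card * haf (subm C0 (((T.erase (el i)).erase (flipv (el i))) \ pairsF S)) else 0)
      = ∑ S : Finset (Fin M),
          (if i ∈ S ∧ pairsF S ⊆ T then
            x ^ S.card * haf (subm C0 (T \ pairsF S)) else 0) := by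
    intro i hiR
    rw [hEl i hiR]
    exact hK i hiR _ rfl
  have h2 : ∀ i ∈ R,
      x * ∑ S : Finset (Fin M),
        (if pairsF S ⊆ (T.erase (er i)).erase (flipv (er i)) then
          x ^ S.card * haf (subm C0 (((T.erase (er i)).erase (flipv (er i))) \ pairsF S)) else 0)
      = ∑ S : Finset (Fin M),
          (if i ∈ S ∧ pairsF S ⊆ T then
            x ^ S.card * haf (subm C0 (T \ pairsF S)) else 0) := by
    intro i hiR
    rw [hEr i hiR]
    exact hK i hiR _ rfl
  rw [Finset.sum_congr rfl h1, Finset.sum_congr rfl h2]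
  -- now we have 2 copies of ∑_{i ∈ R} ∑_S F i S
  rw [← two_mul]
  -- extend to all i
  have hext : ∑ i ∈ R, ∑ S : Finset (Fin M),
      (if i ∈ S ∧ pairsF S ⊆ T then x ^ S.card * haf (subm C0 (T \ pairsF S)) else 0)
      = ∑ i : Fin M, ∑ S : Finset (Fin M),
        (if i ∈ S ∧ pairsF S ⊆ T then x ^ S.card * haf (subm C0 (T \ pairsF S)) else 0) := by
    apply Finset.sum_subset (Finset.subset_univ R)
    intro i _ hiR
    apply Finset.sum_eq_zero
    intro S _
    rw [if_neg]
    rintro ⟨hiS, hsub⟩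
    apply hiR
    rw [hR, Finset.mem_filter]
    refine ⟨Finset.mem_univ _, hsub (el_mem_pairsF.mpr hiS), hsub (er_mem_pairsF.mpr hiS)⟩
  rw [hext, Finset.sum_comm]
  rw [Finset.mul_sum]
  apply Finset.sum_congr rfl
  intro S _
  have : ∀ i : Fin M, (if i ∈ S ∧ pairsF S ⊆ T then
      x ^ S.card * haf (subm C0 (T \ pairsF S)) else 0)
      = (if i ∈ S then
          (if pairsF S ⊆ T then x ^ S.card * haf (subm C0 (T \ pairsF S)) else 0) else 0) := by
    intro i
    by_cases h1 : i ∈ S <;> by_cases h2 : pairsF S ⊆ T <;> simp [h1, h2]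
  rw [Finset.sum_congr rfl (fun i _ => this i)]
  rw [Finset.sum_ite_mem, Finset.univ_inter, Finset.sum_const, nsmul_eq_mul]
  ring

end Claim2
section Key

lemma haf_subm_empty {N : ℕ} (A : Matrix (Fin N) (Fin N) ℝ) : haf (subm A ∅) = 1 :=
  haf_zero _

lemma key {M : ℕ} (A B : Matrix (Fin M) (Fin M) ℝ) (x : ℝ) (T : Finset (Fin (M+M))) :
    haf (subm (Cmat A B x) T) =
      ∑ S : Finset (Fin M), (if pairsF S ⊆ T then
        x ^ S.card * haf (subm (Cmat A B 0) (T \ pairsF S)) else 0) := by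
  induction T using Finset.strongInduction with
  | _ T IH =>
  by_cases h2 : 2 ∣ T.card
  · obtain ⟨p, hp⟩ := h2
    match p, hp with
    | 0, hp =>
      have hT : T = ∅ := Finset.card_eq_zero.mp (by omega)
      subst hT
      have hRempty : pairsF (∅ : Finset (Fin M)) = ∅ := by simp [pairsF]
      rw [haf_subm_empty, Finset.sum_eq_single ∅]
      · rw [hRempty, if_pos (Finset.empty_subset _)]
        simp only [Finset.card_empty, pow_zero, one_mul]
        rw [Finset.sdiff_empty, haf_subm_empty]
      · intro S _ hS
        rw [if_neg]
        intro hsub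
        obtain ⟨i, hi⟩ := Finset.nonempty_iff_ne_empty.mpr hS
        exact absurd (hsub (el_mem_pairsF.mpr hi)) (Finset.notMem_empty _)
      · intro h; exact absurd (Finset.mem_univ _) h
    | q+1, hc =>
      have hne : ((T.card : ℕ) : ℝ) ≠ 0 := by rw [hc]; positivity
      apply mul_left_cancel₀ hne
      rw [← laplace_set (Cmat A B x) T]
      have hstep : ∀ u ∈ T, ∀ v ∈ T.erase u,
          Cmat A B x u v * haf (subm (Cmat A B x) ((T.erase u).erase v))
          = (Cmat A B 0 u v + (if v = flipv u then x else 0)) *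
            ∑ S : Finset (Fin M), (if pairsF S ⊆ (T.erase u).erase v then
              x ^ S.card * haf (subm (Cmat A B 0) (((T.erase u).erase v) \ pairsF S)) else 0) := by
        intro u hu v hv
        rw [← Cmat_apply]
        congr 1
        apply IH
        exact lt_of_le_of_lt (Finset.erase_subset _ _) (Finset.erase_ssubset hu)
      rw [Finset.sum_congr rfl (fun u hu => Finset.sum_congr rfl (fun v hv => hstep u hu v hv))]
      have hsplit : ∀ u ∈ T, ∀ v ∈ T.erase u,
          (Cmat A B 0 u v + (if v = flipv u then x else 0)) *
            ∑ S : Finset (Fin M), (if pairsF S ⊆ (T.erase u).erase v then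
              x ^ S.card * haf (subm (Cmat A B 0) (((T.erase u).erase v) \ pairsF S)) else 0)
          = (Cmat A B 0 u v *
              ∑ S : Finset (Fin M), (if pairsF S ⊆ (T.erase u).erase v then
                x ^ S.card * haf (subm (Cmat A B 0) (((T.erase u).erase v) \ pairsF S)) else 0))
            + ((if v = flipv u then x else 0) *
              ∑ S : Finset (Fin M), (if pairsF S ⊆ (T.erase u).erase v then
                x ^ S.card * haf (subm (Cmat A B 0) (((T.erase u).erase v) \ pairsF S)) else 0)) := by
        intro u _ v _
        ring
      rw [Finset.sum_congr rfl (fun u hu => Finset.sum_congr rfl (fun v hv => hsplit u hu v hv))]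
      rw [Finset.sum_congr rfl (fun u (hu : u ∈ T) => Finset.sum_add_distrib),
        Finset.sum_add_distrib]
      -- part 1
      have hpart1 : ∑ u ∈ T, ∑ v ∈ T.erase u,
          (Cmat A B 0 u v *
            ∑ S : Finset (Fin M), (if pairsF S ⊆ (T.erase u).erase v then
              x ^ S.card * haf (subm (Cmat A B 0) (((T.erase u).erase v) \ pairsF S)) else 0))
          = ∑ S : Finset (Fin M), (((T \ pairsF S).card : ℕ) : ℝ) *
              (if pairsF S ⊆ T then x ^ S.card *
                haf (subm (Cmat A B 0) (T \ pairsF S)) else 0) := by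
        have e1 : ∀ u ∈ T, ∀ v ∈ T.erase u,
            Cmat A B 0 u v *
              ∑ S : Finset (Fin M), (if pairsF S ⊆ (T.erase u).erase v then
                x ^ S.card * haf (subm (Cmat A B 0) (((T.erase u).erase v) \ pairsF S)) else 0)
            = ∑ S : Finset (Fin M), Cmat A B 0 u v *
                (if pairsF S ⊆ (T.erase u).erase v then
                  x ^ S.card * haf (subm (Cmat A B 0) (((T.erase u).erase v) \ pairsF S)) else 0) :=
          fun u _ v _ => Finset.mul_sum _ _ _
        rw [Finset.sum_congr rfl (fun u hu => Finset.sum_congr rfl (fun v hv => e1 u hu v hv))]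
        rw [Finset.sum_congr rfl (fun u (hu : u ∈ T) => Finset.sum_comm), Finset.sum_comm]
        exact Finset.sum_congr rfl (fun S _ => claim1 (Cmat A B 0) T x S)
      -- part 2
      have hpart2 : ∑ u ∈ T, ∑ v ∈ T.erase u,
          ((if v = flipv u then x else 0) *
            ∑ S : Finset (Fin M), (if pairsF S ⊆ (T.erase u).erase v then
              x ^ S.card * haf (subm (Cmat A B 0) (((T.erase u).erase v) \ pairsF S)) else 0))
          = ∑ S : Finset (Fin M), (2 * S.card : ℝ) *
              (if pairsF S ⊆ T then x ^ S.card *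
                haf (subm (Cmat A B 0) (T \ pairsF S)) else 0) := by
        have e2 : ∀ u ∈ T,
            ∑ v ∈ T.erase u, ((if v = flipv u then x else 0) *
              ∑ S : Finset (Fin M), (if pairsF S ⊆ (T.erase u).erase v then
                x ^ S.card * haf (subm (Cmat A B 0) (((T.erase u).erase v) \ pairsF S)) else 0))
            = (if flipv u ∈ T then
                x * ∑ S : Finset (Fin M), (if pairsF S ⊆ (T.erase u).erase (flipv u) then
                  x ^ S.card *
                    haf (subm (Cmat A B 0) (((T.erase u).erase (flipv u)) \ pairsF S)) else 0)
              else 0) := by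
          intro u _
          simp only [ite_mul, zero_mul]
          rw [Finset.sum_ite_eq']
          have hmem : (flipv u ∈ T.erase u) = (flipv u ∈ T) :=
            propext ⟨fun h => (Finset.mem_erase.mp h).2,
              fun h => Finset.mem_erase.mpr ⟨flip_ne u, h⟩⟩
          simp only [hmem]
        rw [Finset.sum_congr rfl e2]
        exact claim2 (Cmat A B 0) T x
      rw [hpart1, hpart2, ← Finset.sum_add_distrib, Finset.mul_sum]
      apply Finset.sum_congr rfl
      intro S _
      by_cases hss : pairsF S ⊆ T
      · have hle : 2 * S.card ≤ T.card := by
          rw [← card_pairsF]; exact Finset.card_le_card hss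
        have hcd : (T \ pairsF S).card = T.card - 2 * S.card := by
          rw [Finset.card_sdiff_of_subset hss, card_pairsF]
        rw [if_pos hss]
        have hcast : ((#(T \ pairsF S) : ℕ) : ℝ) = ((#T : ℕ) : ℝ) - 2 * ((#S : ℕ) : ℝ) := by
          rw [hcd, Nat.cast_sub hle]
          push_cast
          ring
        rw [hcast]
        ring
      · rw [if_neg hss]
        ring
  · rw [haf_odd h2 (subm (Cmat A B x) T)]
    symm
    apply Finset.sum_eq_zero
    intro S _
    by_cases hss : pairsF S ⊆ T
    · have hle : 2 * S.card ≤ T.card := by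
        rw [← card_pairsF]; exact Finset.card_le_card hss
      have hcd : (T \ pairsF S).card = T.card - 2 * S.card := by
        rw [Finset.card_sdiff_of_subset hss, card_pairsF]
      rw [if_pos hss, haf_odd (by rw [hcd]; omega), mul_zero]
    · rw [if_neg hss]

end Key
section Assembly

lemma eval_muPlus_subm {N : ℕ} (A : Matrix (Fin N) (Fin N) ℝ) (D : Finset (Fin N)) (z : ℝ) :
    Polynomial.eval z (muPlus (subm A D))
      = ∑ T ∈ D.powerset, haf (subm A T) * z ^ (D.card - T.card) := by
  rw [muPlus, Polynomial.eval_finset_sum]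
  simp only [Polynomial.eval_mul, Polynomial.eval_C, Polynomial.eval_pow, Polynomial.eval_X]
  apply Finset.sum_bij (fun (S' : Finset (Fin D.card)) (_ : S' ∈ Finset.univ) =>
    S'.image (D.orderEmbOfFin rfl))
  · intro S' _
    rw [Finset.mem_powerset]
    intro w hw
    obtain ⟨j, _, rfl⟩ := Finset.mem_image.mp hw
    exact Finset.orderEmbOfFin_mem D rfl j
  · intro S1 _ S2 _ h
    exact Finset.image_injective (D.orderEmbOfFin rfl).injective h
  · intro T hT
    rw [Finset.mem_powerset] at hT
    refine ⟨Finset.univ.filter (fun j => (D.orderEmbOfFin rfl) j ∈ T), Finset.mem_univ _, ?_⟩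
    ext t
    simp only [Finset.mem_image, Finset.mem_filter, Finset.mem_univ, true_and]
    constructor
    · rintro ⟨j, hj, rfl⟩
      exact hj
    · intro ht
      have : t ∈ Set.range (D.orderEmbOfFin rfl) := by
        rw [Finset.range_orderEmbOfFin]
        exact hT ht
      obtain ⟨j, rfl⟩ := this
      exact ⟨j, ht, rfl⟩
  · intro S' _
    have hcard : (S'.image (D.orderEmbOfFin rfl)).card = S'.card :=
      Finset.card_image_of_injective _ (D.orderEmbOfFin rfl).injective
    have hmem : ∀ i : Fin S'.card,
        ((D.orderEmbOfFin rfl) ∘ (S'.orderEmbOfFin rfl)) i ∈ S'.image (D.orderEmbOfFin rfl) := by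
      intro i
      exact Finset.mem_image.mpr ⟨S'.orderEmbOfFin rfl i, Finset.orderEmbOfFin_mem S' rfl i, rfl⟩
    have hinj : Function.Injective ((D.orderEmbOfFin rfl) ∘ (S'.orderEmbOfFin rfl)) :=
      (D.orderEmbOfFin rfl).injective.comp (S'.orderEmbOfFin rfl).injective
    have h1 : subm (subm A D) S'
        = A.submatrix ((D.orderEmbOfFin rfl) ∘ (S'.orderEmbOfFin rfl))
          ((D.orderEmbOfFin rfl) ∘ (S'.orderEmbOfFin rfl)) := rfl
    rw [h1, haf_subm_of_range A hinj _ hcard hmem]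
    congr 2
    rw [hcard]

theorem mixed_dgbs_duality' {M : ℕ} (A B : Matrix (Fin M) (Fin M) ℝ) (x z : ℝ) :
    ∑ S : Finset (Fin M),
        Polynomial.eval z (muPlus (subm (Cmat A B 0) (Dset S))) * x ^ S.card =
      Polynomial.eval z (muPlus (Cmat A B x)) := by
  conv_rhs => rw [muPlus, Polynomial.eval_finset_sum]
  simp only [Polynomial.eval_mul, Polynomial.eval_C, Polynomial.eval_pow, Polynomial.eval_X]
  have hkey2 : ∀ T : Finset (Fin (M+M)),
      haf (subm (Cmat A B x) T) * z ^ (M + M - T.card)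
      = ∑ S : Finset (Fin M), (if pairsF S ⊆ T then
          x ^ S.card * haf (subm (Cmat A B 0) (T \ pairsF S)) else 0) *
            z ^ (M + M - T.card) := by
    intro T
    rw [key A B x T, Finset.sum_mul]
  rw [Finset.sum_congr rfl (fun T _ => hkey2 T)]
  rw [Finset.sum_comm]
  apply Finset.sum_congr rfl
  intro S _
  -- fixed S : reindex T ↦ T \ pairsF S
  have hstep1 : ∀ T : Finset (Fin (M+M)),
      (if pairsF S ⊆ T then
        x ^ S.card * haf (subm (Cmat A B 0) (T \ pairsF S)) else 0) * z ^ (M + M - T.card)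
      = if pairsF S ⊆ T then
          x ^ S.card * (haf (subm (Cmat A B 0) (T \ pairsF S)) * z ^ (M + M - T.card)) else 0 := by
    intro T
    split_ifs
    · ring
    · ring
  rw [Finset.sum_congr rfl (fun T _ => hstep1 T)]
  rw [← Finset.sum_filter]
  have hmain : ∑ T ∈ Finset.univ.filter (fun T => pairsF S ⊆ T),
      x ^ S.card * (haf (subm (Cmat A B 0) (T \ pairsF S)) * z ^ (M + M - T.card))
      = x ^ S.card * ∑ T' ∈ (Dset S).powerset,
          haf (subm (Cmat A B 0) T') * z ^ ((Dset S).card - T'.card) := by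
    rw [Finset.mul_sum]
    apply Finset.sum_nbij' (i := fun T => T \ pairsF S) (j := fun T' => T' ∪ pairsF S)
    · intro T hT
      rw [Finset.mem_powerset, Dset_eq_compl]
      intro w hw
      rw [Finset.mem_compl]
      exact (Finset.mem_sdiff.mp hw).2
    · intro T' _
      simp only [Finset.mem_filter, Finset.mem_univ, true_and]
      exact Finset.subset_union_right
    · intro T hT
      simp only [Finset.mem_filter, Finset.mem_univ, true_and] at hT
      exact Finset.sdiff_union_of_subset hT
    · intro T' hT'
      rw [Finset.mem_powerset, Dset_eq_compl] at hT'
      have hdisj : Disjoint T' (pairsF S) := by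
        rw [Finset.disjoint_left]
        intro w hw hw'
        have := hT' hw
        rw [Finset.mem_compl] at this
        exact this hw'
      rw [Finset.union_sdiff_cancel_right hdisj]
    · intro T hT
      simp only [Finset.mem_filter, Finset.mem_univ, true_and] at hT
      have h1 : (T \ pairsF S).card = T.card - 2 * S.card := by
        rw [Finset.card_sdiff_of_subset hT, card_pairsF]
      have h2 : 2 * S.card ≤ T.card := by
        rw [← card_pairsF]; exact Finset.card_le_card hT
      have h3 : T.card ≤ M + M := by
        have := Finset.card_le_univ T
        simpa using this
      have hexp : M + M - T.card = (Dset S).card - (T \ pairsF S).card := by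
        rw [card_Dset, h1]
        omega
      rw [hexp]
  rw [hmain, ← eval_muPlus_subm]
  ring

end Assembly

/-- Mixed duality: `∑_{S ⊆ [M]} μ⁺(C(0)_{D(S),D(S)}, z) x^{|S|} = μ⁺(C(x), z)`. -/
theorem mixed_dgbs_duality {M : ℕ} (A B : Matrix (Fin M) (Fin M) ℝ)
    (hA : A.IsSymm) (hB : B.IsSymm) (x z : ℝ) :
    ∑ S : Finset (Fin M),
        Polynomial.eval z (muPlus (subm (Cmat A B 0) (Dset S))) * x ^ S.card =
      Polynomial.eval z (muPlus (Cmat A B x)) :=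
  mixed_dgbs_duality' A B x z
end

section
/- If a finite simple graph G contains no even cycle, then its matching polynomial equals its GBS polynomial: μ_G(x) = GBS_G(x). -/
open Finset Polynomial Equiv SimpleGraph

section AuxCombinatorics

lemma perm_inv_apply_self' {α : Type*} (σ : Equiv.Perm α) (x : α) : σ⁻¹ (σ x) = x :=
  Equiv.Perm.inv_eq_iff_eq.mpr rfl

lemma perm_apply_inv_self' {α : Type*} (σ : Equiv.Perm α) (x : α) : σ (σ⁻¹ x) = x :=
  (Equiv.eq_symm_apply σ).mp rfl

lemma swap01_ne (j : Fin 2) : Equiv.swap 0 1 j ≠ j := by fin_cases j <;> decide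

lemma fin2_swap_of_ne {a b : Fin 2} (h : ¬ a = b) : b = Equiv.swap 0 1 a := by
  fin_cases a <;> fin_cases b <;> simp_all <;> decide

lemma fin2_cases (j : Fin 2) : j = 0 ∨ j = 1 := by
  fin_cases j
  · exact Or.inl rfl
  · exact Or.inr rfl

lemma swap_pow_zero_apply (r : Fin 2) : (Equiv.swap 0 1 ^ ((r : ℕ))) (0 : Fin 2) = r := by
  fin_cases r <;> decide

lemma swap_pow_one_apply (r : Fin 2) :
    (Equiv.swap 0 1 ^ ((r : ℕ))) (1 : Fin 2) = Equiv.swap 0 1 r := by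
  fin_cases r <;> decide

/-- the flip on the second coordinate -/
def flip2 {m : ℕ} : Equiv.Perm (Fin m × Fin 2) :=
  (Equiv.refl (Fin m)).prodCongr (Equiv.swap 0 1)

lemma flip2_apply {m : ℕ} (x : Fin m × Fin 2) : flip2 x = (x.1, Equiv.swap 0 1 x.2) := rfl

lemma flip2_sq {m : ℕ} : (flip2 : Equiv.Perm (Fin m × Fin 2)) * flip2 = 1 := by
  apply Equiv.ext; intro x
  simp only [Equiv.Perm.mul_apply, flip2_apply, Equiv.swap_apply_self, Equiv.Perm.one_apply]

lemma flip2_zero (m : ℕ) (j : Fin m) : flip2 (j, 0) = (j, 1) := by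
  rw [flip2_apply]; exact Prod.ext rfl (show Equiv.swap 0 1 0 = (1 : Fin 2) by decide)

lemma flip2_one (m : ℕ) (j : Fin m) : flip2 (j, 1) = (j, 0) := by
  rw [flip2_apply]; exact Prod.ext rfl (show Equiv.swap 0 1 1 = (0 : Fin 2) by decide)

lemma flip2_fpf {m : ℕ} (x : Fin m × Fin 2) : flip2 x ≠ x := by
  simp only [flip2_apply, ne_eq, Prod.ext_iff, not_and]
  intro _
  exact swap01_ne x.2

lemma conj_conj {G : Type*} [Group G] (σ a b : G) :
    (σ * a * σ⁻¹) * (σ * b * σ⁻¹) = σ * (a * b) * σ⁻¹ := by group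

noncomputable def shearMap {m : ℕ} (p : Equiv.Perm (Fin m) × (Fin m → Fin 2)) :
    Equiv.Perm (Fin m × Fin 2) :=
  Equiv.prodShear p.1 (fun i => Equiv.swap 0 1 ^ ((p.2 i : ℕ)))

lemma shearMap_apply {m : ℕ} (p : Equiv.Perm (Fin m) × (Fin m → Fin 2)) (x : Fin m × Fin 2) :
    shearMap p x = (p.1 x.1, (Equiv.swap 0 1 ^ ((p.2 x.1 : ℕ))) x.2) := rfl

/-- the cardinality of the centralizer of `flip2` -/
lemma card_centralizer_flip2 (m : ℕ) :
    (Finset.univ.filter fun τ : Equiv.Perm (Fin m × Fin 2) =>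
      τ * flip2 = flip2 * τ).card = m.factorial * 2 ^ m := by
  classical
  have key : (Finset.univ : Finset (Equiv.Perm (Fin m) × (Fin m → Fin 2))).card
      = (Finset.univ.filter fun τ : Equiv.Perm (Fin m × Fin 2) =>
        τ * flip2 = flip2 * τ).card := by
    apply Finset.card_bij (fun p _ => shearMap p)
    · intro p _
      simp only [Finset.mem_filter, Finset.mem_univ, true_and]
      apply Equiv.ext; rintro ⟨i, j⟩
      simp only [Equiv.Perm.mul_apply, shearMap_apply, flip2_apply]
      refine Prod.ext rfl ?_
      show ((Equiv.swap 0 1 ^ ((p.2 i : ℕ))) (Equiv.swap 0 1 j) : Fin 2)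
          = Equiv.swap 0 1 ((Equiv.swap 0 1 ^ ((p.2 i : ℕ))) j)
      rw [← Equiv.Perm.mul_apply, ← Equiv.Perm.mul_apply, pow_mul_comm']
    · intro p _ q _ hpq
      have h0 : ∀ i : Fin m, shearMap p (i, 0) = shearMap q (i, 0) := fun i => by rw [hpq]
      have h1 : p.1 = q.1 := by
        apply Equiv.ext; intro i
        have := congrArg Prod.fst (h0 i)
        simpa [shearMap_apply] using this
      have h2 : p.2 = q.2 := by
        funext i
        have := congrArg Prod.snd (h0 i)
        simpa [shearMap_apply, swap_pow_zero_apply] using this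
      exact Prod.ext h1 h2
    · intro τ hτ
      simp only [Finset.mem_filter, Finset.mem_univ, true_and] at hτ
      have hcomm : ∀ x, τ (flip2 x) = flip2 (τ x) := fun x => by
        have := Equiv.ext_iff.mp hτ x
        simpa [Equiv.Perm.mul_apply] using this
      set π' : Fin m → Fin m := fun i => (τ (i, 0)).1 with hπ'
      set ε : Fin m → Fin 2 := fun i => (τ (i, 0)).2 with hε
      have hτ0 : ∀ i, τ (i, 0) = (π' i, ε i) := fun i => rfl
      have hτ1 : ∀ i, τ (i, 1) = (π' i, Equiv.swap 0 1 (ε i)) := by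
        intro i
        have h10 : ((i : Fin m), (1 : Fin 2)) = flip2 ((i : Fin m), (0 : Fin 2)) := by
          rw [flip2_apply]
          refine Prod.ext rfl (show (1 : Fin 2) = Equiv.swap 0 1 0 by decide)
        rw [h10, hcomm, hτ0, flip2_apply]
      have hπinj : Function.Injective π' := by
        intro i i' h
        by_cases hee : ε i = ε i'
        · have : τ (i, 0) = τ (i', 0) := by rw [hτ0, hτ0, h, hee]
          exact (Prod.ext_iff.mp (τ.injective this)).1
        · have hsw : ε i' = Equiv.swap 0 1 (ε i) := fin2_swap_of_ne hee
          have : τ (i', 0) = τ (i, 1) := by rw [hτ0, hτ1, h, hsw]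
          have := τ.injective this
          simp [Prod.ext_iff] at this
      have hπbij : Function.Bijective π' := Finite.injective_iff_bijective.mp hπinj
      refine ⟨(Equiv.ofBijective π' hπbij, ε), Finset.mem_univ _, ?_⟩
      apply Equiv.ext; rintro ⟨i, j⟩
      rw [shearMap_apply]
      rcases fin2_cases j with hj | hj <;> subst hj
      · rw [hτ0 i]
        exact Prod.ext rfl (swap_pow_zero_apply (ε i))
      · rw [hτ1 i]
        exact Prod.ext rfl (swap_pow_one_apply (ε i))
  rw [← key]
  simp [Fintype.card_perm]

end AuxCombinatorics

lemma haf_zero_or_one {n : ℕ} (B : Matrix (Fin n) (Fin n) ℝ)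
    (hsym : ∀ x y, B x y = B y x) (h01 : ∀ x y, B x y = 0 ∨ B x y = 1)
    (huniq : ∀ f g : Equiv.Perm (Fin n), f * f = 1 → g * g = 1 →
      (∀ x, f x ≠ x) → (∀ x, g x ≠ x) →
      (∀ x, B x (f x) = 1) → (∀ x, B x (g x) = 1) → f = g) :
    haf B = 0 ∨ haf B = 1 := by
  classical
  by_cases h2 : 2 ∣ n
  · rw [haf, dif_pos h2]
    have hmn : n / 2 * 2 = n := Nat.div_mul_cancel h2
    set E : Fin (n / 2) × Fin 2 ≃ Fin n :=
      finProdFinEquiv.trans (finCongr hmn) with hE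
    have hEval : ∀ (j : Fin (n / 2)) (r : Fin 2), (E (j, r) : ℕ) = r + 2 * j.1 := by
      intro j r
      simp only [hE, Equiv.trans_apply, finCongr_apply, Fin.coe_cast, finProdFinEquiv_apply_val]
    have hE0 : ∀ (j : Fin (n / 2)) (pf : 2 * j.1 < n),
        (⟨2 * j.1, pf⟩ : Fin n) = E (j, 0) := by
      intro j pf
      apply Fin.ext
      rw [hEval]
      show 2 * j.1 = (0 : Fin 2).1 + 2 * j.1
      omega
    have hE1 : ∀ (j : Fin (n / 2)) (pf : 2 * j.1 + 1 < n),
        (⟨2 * j.1 + 1, pf⟩ : Fin n) = E (j, 1) := by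
      intro j pf
      apply Fin.ext
      rw [hEval]
      show 2 * j.1 + 1 = (1 : Fin 2).1 + 2 * j.1
      omega
    set w : Equiv.Perm (Fin n) := E.permCongr flip2 with hw
    have hwE : ∀ x, w (E x) = E (flip2 x) := by
      intro x; simp [hw, Equiv.permCongr_apply]
    have hwsq : w * w = 1 := by
      apply Equiv.ext; intro x
      have hx : x = E (E.symm x) := (E.apply_symm_apply x).symm
      rw [hx, Equiv.Perm.mul_apply, hwE, hwE, Equiv.Perm.one_apply]
      congr 1
      exact Equiv.ext_iff.mp flip2_sq (E.symm x)
    have hwfpf : ∀ x, w x ≠ x := by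
      intro x hx
      have hx2 : x = E (E.symm x) := (E.apply_symm_apply x).symm
      rw [hx2, hwE] at hx
      exact flip2_fpf (E.symm x) (E.injective hx)
    set P : Equiv.Perm (Fin n) → Prop := fun σ => ∀ x, B x ((σ * w * σ⁻¹) x) = 1 with hP
    -- the product equals the indicator of P
    have hprod : ∀ σ : Equiv.Perm (Fin n),
        (∏ j : Fin (n / 2), B (σ ⟨2 * j.1, by omega⟩) (σ ⟨2 * j.1 + 1, by omega⟩))
          = if P σ then 1 else 0 := by
      intro σ
      have hQP : (∀ j : Fin (n / 2), B (σ (E (j, 0))) (σ (E (j, 1))) = 1) ↔ P σ := by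
        constructor
        · intro hQ x
          obtain ⟨⟨j, r⟩, hy⟩ : ∃ y, E y = σ⁻¹ x := ⟨E.symm (σ⁻¹ x), E.apply_symm_apply _⟩
          have hx : x = σ (E (j, r)) := by rw [hy]; simp
          have hco : (σ * w * σ⁻¹) x = σ (E (flip2 (j, r))) := by
            rw [Equiv.Perm.mul_apply, Equiv.Perm.mul_apply, ← hy, hwE]
          rcases fin2_cases r with hr | hr <;> subst hr
          · rw [hco, hx, flip2_zero]
            exact hQ j
          · rw [hco, hx, flip2_one, hsym]
            exact hQ j
        · intro hp j
          have hh := hp (σ (E (j, 0)))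
          have hco : (σ * w * σ⁻¹) (σ (E (j, 0))) = σ (E (j, 1)) := by
            rw [Equiv.Perm.mul_apply, Equiv.Perm.mul_apply, perm_inv_apply_self', hwE,
              flip2_zero]
          rwa [hco] at hh
      by_cases hQ : ∀ j : Fin (n / 2), B (σ (E (j, 0))) (σ (E (j, 1))) = 1
      · rw [if_pos (hQP.mp hQ)]
        apply Finset.prod_eq_one
        intro j _
        rw [hE0 j, hE1 j]
        exact hQ j
      · rw [if_neg (fun hp => hQ (hQP.mpr hp))]
        push_neg at hQ
        obtain ⟨j, hj⟩ := hQ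
        apply Finset.prod_eq_zero (Finset.mem_univ j)
        rw [hE0 j, hE1 j]
        rcases h01 (σ (E (j, 0))) (σ (E (j, 1))) with h | h
        · exact h
        · exact absurd h hj
    rw [Finset.sum_congr rfl (fun σ _ => hprod σ), Finset.sum_boole]
    by_cases hne : (Finset.univ.filter P).Nonempty
    · obtain ⟨σ₀, hσ₀⟩ := hne
      have hPσ₀ : P σ₀ := (Finset.mem_filter.mp hσ₀).2
      have hinvo : ∀ σ : Equiv.Perm (Fin n), (σ * w * σ⁻¹) * (σ * w * σ⁻¹) = 1 := by
        intro σ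
        rw [conj_conj, hwsq, mul_one, mul_inv_cancel]
      have hfpf : ∀ (σ : Equiv.Perm (Fin n)) (x), (σ * w * σ⁻¹) x ≠ x := by
        intro σ x hx
        rw [Equiv.Perm.mul_apply, Equiv.Perm.mul_apply] at hx
        exact hwfpf (σ⁻¹ x) (σ.injective (hx.trans (perm_apply_inv_self' σ x).symm))
      have hconj : ∀ σ, P σ → σ * w * σ⁻¹ = σ₀ * w * σ₀⁻¹ :=
        fun σ hσ => huniq _ _ (hinvo σ) (hinvo σ₀) (hfpf σ) (hfpf σ₀) hσ hPσ₀
      -- filter P has the same cardinality as the centralizer of w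
      have hcard1 : (Finset.univ.filter P).card =
          (Finset.univ.filter fun τ : Equiv.Perm (Fin n) => τ * w = w * τ).card := by
        apply Finset.card_bij' (fun σ _ => σ₀⁻¹ * σ) (fun τ _ => σ₀ * τ)
        · intro σ hσ
          have hPσ : P σ := (Finset.mem_filter.mp hσ).2
          simp only [Finset.mem_filter, Finset.mem_univ, true_and]
          have hcc := hconj σ hPσ
          calc σ₀⁻¹ * σ * w = σ₀⁻¹ * (σ * w * σ⁻¹) * σ := by group
          _ = σ₀⁻¹ * (σ₀ * w * σ₀⁻¹) * σ := by rw [hcc]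
          _ = w * (σ₀⁻¹ * σ) := by group
        · intro τ hτ
          have hcc : τ * w = w * τ := (Finset.mem_filter.mp hτ).2
          simp only [Finset.mem_filter, Finset.mem_univ, true_and]
          have : σ₀ * τ * w * (σ₀ * τ)⁻¹ = σ₀ * w * σ₀⁻¹ := by
            calc σ₀ * τ * w * (σ₀ * τ)⁻¹ = σ₀ * (τ * w) * τ⁻¹ * σ₀⁻¹ := by group
            _ = σ₀ * (w * τ) * τ⁻¹ * σ₀⁻¹ := by rw [hcc]
            _ = σ₀ * w * σ₀⁻¹ := by group
          show P (σ₀ * τ)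
          intro x
          rw [this]
          exact hPσ₀ x
        · intro σ _; group
        · intro τ _; group
      -- centralizer of w has the same cardinality as that of flip2
      have hcard2 : (Finset.univ.filter fun τ : Equiv.Perm (Fin n) => τ * w = w * τ).card =
          (Finset.univ.filter fun τ : Equiv.Perm (Fin (n / 2) × Fin 2) =>
            τ * flip2 = flip2 * τ).card := by
        have permCongr_mul : ∀ a b : Equiv.Perm (Fin (n / 2) × Fin 2),
            E.permCongr (a * b) = E.permCongr a * E.permCongr b := by
          intro a b
          apply Equiv.ext; intro x
          simp [Equiv.permCongr_apply, Equiv.Perm.mul_apply]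
        have permCongr_mul' : ∀ a b : Equiv.Perm (Fin n),
            E.symm.permCongr (a * b) = E.symm.permCongr a * E.symm.permCongr b := by
          intro a b
          apply Equiv.ext; intro x
          simp [Equiv.permCongr_apply, Equiv.Perm.mul_apply]
        have h_back : ∀ τ, E.permCongr (E.symm.permCongr τ) = τ := by
          intro τ; apply Equiv.ext; intro x; simp [Equiv.permCongr_apply]
        have h_fwd : ∀ τ, E.symm.permCongr (E.permCongr τ) = τ := by
          intro τ; apply Equiv.ext; intro x; simp [Equiv.permCongr_apply]
        have h_w : E.symm.permCongr w = flip2 := by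
          rw [hw, h_fwd]
        apply Finset.card_bij' (fun τ _ => E.symm.permCongr τ) (fun τ _ => E.permCongr τ)
        · intro τ hτ
          have hcc : τ * w = w * τ := (Finset.mem_filter.mp hτ).2
          simp only [Finset.mem_filter, Finset.mem_univ, true_and]
          rw [← h_w, ← permCongr_mul', ← permCongr_mul', hcc]
        · intro τ hτ
          have hcc : τ * flip2 = flip2 * τ := (Finset.mem_filter.mp hτ).2
          simp only [Finset.mem_filter, Finset.mem_univ, true_and]
          rw [hw, ← permCongr_mul, ← permCongr_mul, hcc]
        · intro τ _; exact h_back τ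
        · intro τ _; exact h_fwd τ
      rw [hcard1, hcard2, card_centralizer_flip2]
      right
      rw [inv_mul_cancel₀]
      positivity
    · rw [Finset.not_nonempty_iff_eq_empty] at hne
      rw [hne]
      left; simp
  · left; rw [haf, dif_neg h2]

section AuxGraph

variable {V : Type*} (G : SimpleGraph V)

/-- walk along a sequence of adjacent vertices -/
def walkFrom (u : ℕ → V) : (k : ℕ) → (∀ i < k, G.Adj (u i) (u (i+1))) → G.Walk (u 0) (u k)
  | 0, _ => SimpleGraph.Walk.nil
  | (k+1), hadj => (walkFrom u k (fun i hi => hadj i (by omega))).concat (hadj k (by omega))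

lemma walkFrom_length (u : ℕ → V) (k : ℕ) (h : ∀ i < k, G.Adj (u i) (u (i+1))) :
    (walkFrom G u k h).length = k := by
  induction k with
  | zero => rfl
  | succ k ih => rw [walkFrom, SimpleGraph.Walk.length_concat, ih]

lemma walkFrom_support (u : ℕ → V) (k : ℕ) (h : ∀ i < k, G.Adj (u i) (u (i+1))) :
    (walkFrom G u k h).support = (List.range (k+1)).map u := by
  induction k with
  | zero => rfl
  | succ k ih =>
    rw [walkFrom, SimpleGraph.Walk.support_concat, ih,
      List.range_succ (n := k+1), List.map_append]
    rfl

lemma walkFrom_edges (u : ℕ → V) (k : ℕ) (h : ∀ i < k, G.Adj (u i) (u (i+1))) :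
    (walkFrom G u k h).edges = (List.range k).map (fun i => s(u i, u (i+1))) := by
  induction k with
  | zero => rfl
  | succ k ih =>
    rw [walkFrom, SimpleGraph.Walk.edges_concat, ih, List.concat_eq_append,
      List.range_succ (n := k), List.map_append]
    rfl

/-- two distinct fixed-point-free involutions along an embedded vertex set give an even cycle -/
lemma exists_even_cycle {M n : ℕ} (G : SimpleGraph (Fin M)) (e : Fin n → Fin M)
    (he : Function.Injective e)
    (f g : Equiv.Perm (Fin n)) (hf2 : f * f = 1) (hg2 : g * g = 1)
    (hff : ∀ x, f x ≠ x) (hgf : ∀ x, g x ≠ x)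
    (hfe : ∀ x, G.Adj (e x) (e (f x))) (hge : ∀ x, G.Adj (e x) (e (g x)))
    (hne : f ≠ g) :
    ∃ (v : Fin M) (wk : G.Walk v v), wk.IsCycle ∧ Even wk.length := by
  classical
  -- a vertex where they differ
  obtain ⟨v, hv⟩ : ∃ v, f v ≠ g v := by
    by_contra hc
    push_neg at hc
    exact hne (Equiv.ext hc)
  have hfinv : f⁻¹ = f := inv_eq_of_mul_eq_one_right hf2
  have hginv : g⁻¹ = g := inv_eq_of_mul_eq_one_right hg2
  set c : Equiv.Perm (Fin n) := g * f with hc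
  have hcf : c * f = g := by rw [hc, mul_assoc, hf2, mul_one]
  have hfc : f * c = c⁻¹ * f := by
    rw [hc, mul_inv_rev, hfinv, hginv, ← mul_assoc]
  have hfck : ∀ k : ℕ, f * c ^ k = (c ^ k)⁻¹ * f := by
    intro k
    induction k with
    | zero => simp
    | succ k ih =>
      rw [pow_succ, ← mul_assoc, ih, mul_assoc, hfc, ← mul_assoc, ← mul_inv_rev]
      exact congrArg (· * f) (congrArg Inv.inv ((pow_succ' c k).symm.trans (pow_succ c k)))
  -- v is a periodic point of c
  have hmem : v ∈ Function.periodicPts ⇑c := by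
    apply Function.mk_mem_periodicPts (orderOf_pos c)
    show (⇑c)^[orderOf c] v = v
    rw [Equiv.Perm.iterate_eq_pow, pow_orderOf_eq_one]
    rfl
  set m : ℕ := Function.minimalPeriod ⇑c v with hm
  have hm0 : 0 < m := Function.minimalPeriod_pos_of_mem_periodicPts hmem
  have hcm : (c ^ m) v = v := by
    have := Function.iterate_minimalPeriod (f := ⇑c) (x := v)
    rwa [Equiv.Perm.iterate_eq_pow] at this
  have hm1 : m ≠ 1 := by
    intro h1
    have : (c ^ m) v = c v := by rw [h1, pow_one]
    rw [hcm] at this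
    have : g (g (f v)) = g v := congrArg g this.symm
    rw [← Equiv.Perm.mul_apply g g, hg2, Equiv.Perm.one_apply] at this
    exact hv this
  have hm2 : 2 ≤ m := by omega
  -- injectivity of the orbit
  have horb : ∀ s < m, ∀ t < m, (c ^ s) v = (c ^ t) v → s = t := by
    intro s hs t ht hst
    exact Function.iterate_injOn_Iio_minimalPeriod (Set.mem_Iio.mpr hs) (Set.mem_Iio.mpr ht)
      (show (⇑c)^[s] v = (⇑c)^[t] v by
        rw [Equiv.Perm.iterate_eq_pow, Equiv.Perm.iterate_eq_pow]; exact hst)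
  -- even positions differ from odd positions
  have hD : ∀ s t : ℕ, (c ^ s) v ≠ f ((c ^ t) v) := by
    intro s t hEq
    have h1 : f v = (c ^ (t + s)) v := by
      have h2 : f ((c ^ t) v) = (c ^ t)⁻¹ (f v) := by
        rw [← Equiv.Perm.mul_apply, hfck, Equiv.Perm.mul_apply]
      rw [h2] at hEq
      have := congrArg (⇑(c ^ t)) hEq
      rw [perm_apply_inv_self', ← Equiv.Perm.mul_apply, ← pow_add] at this
      exact this.symm
    set T := t + s with hT
    have h2 : ∀ k ≤ T, f ((c ^ k) v) = (c ^ (T - k)) v := by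
      intro k hk
      rw [← Equiv.Perm.mul_apply, hfck, Equiv.Perm.mul_apply, h1]
      have : (c ^ T) v = (c ^ k) ((c ^ (T - k)) v) := by
        rw [← Equiv.Perm.mul_apply, ← pow_add]
        congr 2
        omega
      rw [this, perm_inv_apply_self']
    rcases Nat.even_or_odd T with hTe | hTo
    · obtain ⟨p, hp⟩ := hTe
      have := h2 p (by omega)
      have hTp : T - p = p := by omega
      rw [hTp] at this
      exact hff _ this
    · obtain ⟨p, hp⟩ := hTo
      have h3 := h2 (p + 1) (by omega)
      have h4 : g ((c ^ (p+1)) v) = c (f ((c ^ (p+1)) v)) := by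
        rw [show c (f ((c ^ (p+1)) v)) = (c * f) ((c ^ (p+1)) v) from rfl, hcf]
      have hTp : T - (p + 1) = p := by omega
      have h5 : c ((c ^ p) v) = (c ^ (p+1)) v := by
        rw [show c ((c ^ p) v) = (c * c ^ p) v from rfl, ← pow_succ']
      rw [h3, hTp, h5] at h4
      exact hgf _ h4
  -- the sequence of vertices
  set b : ℕ → Fin n := fun i => if Even i then (c ^ (i / 2)) v else f ((c ^ (i / 2)) v) with hb
  have hbinj : ∀ i < 2 * m, ∀ j < 2 * m, b i = b j → i = j := by
    intro i hi j hj hij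
    rcases Nat.even_or_odd i with hie | hio <;> rcases Nat.even_or_odd j with hje | hjo
    · rw [hb] at hij
      simp only [if_pos hie, if_pos hje] at hij
      have := horb (i / 2) (by omega) (j / 2) (by omega) hij
      obtain ⟨p, hp⟩ := hie; obtain ⟨q, hq⟩ := hje
      omega
    · rw [hb] at hij
      simp only [if_pos hie, if_neg (Nat.not_even_iff_odd.mpr hjo)] at hij
      exact absurd hij (hD _ _)
    · rw [hb] at hij
      simp only [if_neg (Nat.not_even_iff_odd.mpr hio), if_pos hje] at hij
      exact absurd hij.symm (hD _ _)
    · rw [hb] at hij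
      simp only [if_neg (Nat.not_even_iff_odd.mpr hio), if_neg (Nat.not_even_iff_odd.mpr hjo)]
        at hij
      have := f.injective hij
      have := horb (i / 2) (by omega) (j / 2) (by omega) this
      obtain ⟨p, hp⟩ := hio; obtain ⟨q, hq⟩ := hjo
      omega
  set u : ℕ → Fin M := fun i => e (b i) with hu
  have hadj : ∀ i, G.Adj (u i) (u (i + 1)) := by
    intro i
    rcases Nat.even_or_odd i with hie | hio
    · have hio' : ¬ Even (i + 1) := by
        obtain ⟨p, hp⟩ := hie; intro h; obtain ⟨q, hq⟩ := h; omega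
      have h12 : (i + 1) / 2 = i / 2 := by obtain ⟨p, hp⟩ := hie; omega
      rw [hu, hb]
      simp only [if_pos hie, if_neg hio', h12]
      exact hfe _
    · have hje : Even (i + 1) := by
        obtain ⟨p, hp⟩ := hio; exact ⟨p + 1, by omega⟩
      have h12 : (i + 1) / 2 = i / 2 + 1 := by obtain ⟨p, hp⟩ := hio; omega
      rw [hu, hb]
      simp only [if_neg (Nat.not_even_iff_odd.mpr hio), if_pos hje, h12]
      have : (c ^ (i / 2 + 1)) v = g (f ((c ^ (i / 2)) v)) := by
        rw [pow_succ', Equiv.Perm.mul_apply, hc, Equiv.Perm.mul_apply]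
      rw [this]
      exact hge _
  set L : ℕ := 2 * m with hL
  have hbL : b L = b 0 := by
    have hLe : Even L := ⟨m, by omega⟩
    have h1 : b L = (c ^ (L / 2)) v := by simp only [hb]; rw [if_pos hLe]
    have h2 : b 0 = (c ^ (0 / 2)) v := by simp only [hb]; rw [if_pos Even.zero]
    rw [h1, h2, show L / 2 = m from by omega, hcm, show (0:ℕ) / 2 = 0 from rfl, pow_zero]
    rfl
  have huL : u L = u 0 := by rw [hu]; simp only [hbL]
  -- build the closed walk
  have hadj' : ∀ i < L - 1, G.Adj (u (i+1)) (u (i+1+1)) := fun i _ => hadj (i+1)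
  set p : G.Walk (u 1) (u (L - 1 + 1)) := walkFrom G (fun i => u (i + 1)) (L - 1) hadj' with hp
  have hL1 : L - 1 + 1 = L := by omega
  set q : G.Walk (u 1) (u 0) := p.copy rfl (by rw [hL1, huL]) with hq
  set cyc : G.Walk (u 0) (u 0) := SimpleGraph.Walk.cons (hadj 0) q with hcyc
  refine ⟨u 0, cyc, ?_, ?_⟩
  · rw [hcyc, SimpleGraph.Walk.cons_isCycle_iff]
    constructor
    · -- q is a path
      rw [SimpleGraph.Walk.isPath_def, hq, SimpleGraph.Walk.support_copy, hp, walkFrom_support]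
      apply List.Nodup.map_on
      · intro x hx y hy hxy
        rw [List.mem_range] at hx hy
        have hbb : b (x + 1) = b (y + 1) := he hxy
        rcases eq_or_lt_of_le (show x + 1 ≤ L from by omega) with hxL | hxL <;>
          rcases eq_or_lt_of_le (show y + 1 ≤ L from by omega) with hyL | hyL
        · omega
        · rw [hxL, hbL] at hbb
          have := hbinj 0 (by omega) (y+1) hyL hbb
          omega
        · rw [hyL, hbL] at hbb
          have := hbinj (x+1) hxL 0 (by omega) hbb
          omega
        · have := hbinj (x+1) hxL (y+1) hyL hbb
          omega
      · exact List.nodup_range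
    · -- the closing edge is not among the path edges
      rw [hq, SimpleGraph.Walk.edges_copy, hp, walkFrom_edges]
      intro hmem
      rw [List.mem_map] at hmem
      obtain ⟨i, hi, hie⟩ := hmem
      rw [List.mem_range] at hi
      rw [Sym2.eq_iff] at hie
      rcases hie with ⟨h1, h2⟩ | ⟨h1, h2⟩
      · -- u (i+1) = u 0
        have hbb : b (i + 1) = b 0 := he h1
        have := hbinj (i+1) (by omega) 0 (by omega) hbb
        omega
      · -- u (i+1) = u 1 and u (i+2) = u 0
        have hbb1 : b (i + 1) = b 1 := he h1
        have hi1 := hbinj (i+1) (by omega) 1 (by omega) hbb1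
        have hbb0 : b (i + 1 + 1) = b 0 := he h2
        have h2L : i + 1 + 1 < L := by omega
        have := hbinj (i+1+1) h2L 0 (by omega) hbb0
        omega
  · rw [hcyc]
    rw [SimpleGraph.Walk.length_cons, hq, SimpleGraph.Walk.length_copy, hp, walkFrom_length]
    exact ⟨m, by omega⟩

end AuxGraph

/-- If a simple graph has no even cycle then its matching polynomial equals
its GBS polynomial. -/
theorem matchPoly_eq_gbs_of_no_even_cycle {M : ℕ} (G : SimpleGraph (Fin M))
    [DecidableRel G.Adj]
    (h : ∀ (v : Fin M) (w : G.Walk v v), w.IsCycle → ¬ Even w.length) :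
    matchPoly (G.adjMatrix ℝ) = GBS (G.adjMatrix ℝ) := by
  classical
  rw [matchPoly, GBS]
  apply Finset.sum_congr rfl
  intro S _
  have key : haf (subm (G.adjMatrix ℝ) S) = (haf (subm (G.adjMatrix ℝ) S)) ^ 2 := by
    set e : Fin S.card → Fin M := fun i => S.orderEmbOfFin rfl i with he'
    have he : Function.Injective e := fun a b hab => (S.orderEmbOfFin rfl).injective hab
    have hB : ∀ x y, subm (G.adjMatrix ℝ) S x y = if G.Adj (e x) (e y) then 1 else 0 := by
      intro x y
      rw [subm, SimpleGraph.adjMatrix_apply]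
    have hBadj : ∀ x y, subm (G.adjMatrix ℝ) S x y = 1 ↔ G.Adj (e x) (e y) := by
      intro x y
      rw [hB]
      by_cases hxy : G.Adj (e x) (e y)
      · simp [hxy]
      · simp [hxy]
    rcases haf_zero_or_one (subm (G.adjMatrix ℝ) S)
        (fun x y => by rw [hB, hB]; simp only [G.adj_comm (e x) (e y)])
        (fun x y => by rw [hB]; by_cases hxy : G.Adj (e x) (e y) <;> simp [hxy])
        (fun f g hf2 hg2 hff hgf hfe hge => by
          by_contra hne
          obtain ⟨v, wk, hcyc, heven⟩ := exists_even_cycle G e he f g hf2 hg2 hff hgf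
            (fun x => (hBadj x (f x)).mp (hfe x)) (fun x => (hBadj x (g x)).mp (hge x)) hne
          exact h v wk hcyc heven) with h0 | h1
    · rw [h0]; ring
    · rw [h1]; ring
  conv_lhs => rw [key]
end

section
/- For an even cycle C_n (n even), GBS_{C_n}(x) = μ_{C_n}(x) + 2·(−1)^{n/2}, where μ is the matching polynomial and GBS is the GBS polynomial. -/
open Finset Polynomial

section Aux
open Equiv

def tauP (m : ℕ) (hm : 2 ∣ m) : Equiv.Perm (Fin m) :=
  Function.Involutive.toPerm
    (fun p => ⟨if p.1 % 2 = 0 then p.1 + 1 else p.1 - 1, by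
      obtain ⟨k, rfl⟩ := hm; have := p.isLt; split <;> omega⟩)
    (by
      intro p; apply Fin.ext
      simp only
      have := p.isLt
      split_ifs <;> omega)

lemma tauP_val {m : ℕ} (hm : 2 ∣ m) (p : Fin m) :
    (tauP m hm p).1 = if p.1 % 2 = 0 then p.1 + 1 else p.1 - 1 := rfl

lemma tauP_ne {m : ℕ} (hm : 2 ∣ m) (p : Fin m) : tauP m hm p ≠ p := by
  intro h
  have hv := congrArg Fin.val h
  rw [tauP_val] at hv
  have hlt := p.isLt
  split_ifs at hv <;> omega

lemma tauP_invol {m : ℕ} (hm : 2 ∣ m) (p : Fin m) : tauP m hm (tauP m hm p) = p := by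
  apply Fin.ext
  rw [tauP_val, tauP_val]
  have hlt := p.isLt
  obtain ⟨k, hk⟩ := hm
  split_ifs <;> omega

def pIdx {m : ℕ} (hm : 2 ∣ m) (p : Fin m) : Fin (m / 2) :=
  ⟨p.1 / 2, by have h1 := p.isLt; have h2 := Nat.div_mul_cancel hm; omega⟩

lemma pIdx_val {m : ℕ} (hm : 2 ∣ m) (p : Fin m) : (pIdx hm p).1 = p.1 / 2 := rfl

def bldF {m : ℕ} (hm : 2 ∣ m) (π : Equiv.Perm (Fin (m / 2))) (ε : Fin (m / 2) → Bool)
    (p : Fin m) : Fin m :=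
  ⟨2 * (π (pIdx hm p)).1 + (if ε (pIdx hm p) then 1 - p.1 % 2 else p.1 % 2), by
    have h1 := (π (pIdx hm p)).isLt
    have h2 := Nat.div_mul_cancel hm
    split <;> omega⟩

lemma bldF_val {m : ℕ} (hm : 2 ∣ m) (π : Equiv.Perm (Fin (m / 2))) (ε : Fin (m / 2) → Bool)
    (p : Fin m) : (bldF hm π ε p).1
      = 2 * (π (pIdx hm p)).1 + (if ε (pIdx hm p) then 1 - p.1 % 2 else p.1 % 2) := rfl

lemma bldF_linv {m : ℕ} (hm : 2 ∣ m) (π : Equiv.Perm (Fin (m / 2))) (ε : Fin (m / 2) → Bool) :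
    Function.LeftInverse (bldF hm π.symm fun j => ε (π.symm j)) (bldF hm π ε) := by
  intro p
  have hpi : pIdx hm (bldF hm π ε p) = π (pIdx hm p) := by
    apply Fin.ext
    simp only [pIdx_val, bldF_val]
    split_ifs <;> omega
  have hmod : (bldF hm π ε p).1 % 2 = if ε (pIdx hm p) then 1 - p.1 % 2 else p.1 % 2 := by
    rw [bldF_val]
    split_ifs <;> omega
  apply Fin.ext
  rw [bldF_val, hpi, Equiv.symm_apply_apply, hmod]
  have h1 := p.isLt
  have h2 : (pIdx hm p).1 = p.1 / 2 := rfl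
  cases hε : ε (pIdx hm p) <;>
    simp only [hε, Bool.false_eq_true, if_true, if_false] <;> omega

def buildP {m : ℕ} (hm : 2 ∣ m) (π : Equiv.Perm (Fin (m / 2))) (ε : Fin (m / 2) → Bool) :
    Equiv.Perm (Fin m) where
  toFun := bldF hm π ε
  invFun := bldF hm π.symm fun j => ε (π.symm j)
  left_inv := bldF_linv hm π ε
  right_inv := by
    have h := bldF_linv hm π.symm (fun j => ε (π.symm j))
    simp only [Equiv.symm_symm] at h
    intro p
    have := h p
    convert this using 2
    · ext j; simp

def dbl {m : ℕ} (hm : 2 ∣ m) (j : Fin (m / 2)) : Fin m :=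
  ⟨2 * j.1, by have := j.isLt; have := Nat.div_mul_cancel hm; omega⟩

def dbl1 {m : ℕ} (hm : 2 ∣ m) (j : Fin (m / 2)) : Fin m :=
  ⟨2 * j.1 + 1, by have := j.isLt; have := Nat.div_mul_cancel hm; omega⟩

lemma pIdx_dbl {m : ℕ} (hm : 2 ∣ m) (j : Fin (m / 2)) : pIdx hm (dbl hm j) = j := by
  apply Fin.ext; simp only [pIdx_val, dbl]; omega

lemma pIdx_dbl1 {m : ℕ} (hm : 2 ∣ m) (j : Fin (m / 2)) : pIdx hm (dbl1 hm j) = j := by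
  apply Fin.ext; simp only [pIdx_val, dbl1]; omega

lemma tauP_dbl {m : ℕ} (hm : 2 ∣ m) (j : Fin (m / 2)) :
    tauP m hm (dbl hm j) = dbl1 hm j := by
  apply Fin.ext; rw [tauP_val]; split_ifs <;> simp only [dbl, dbl1] at * <;> omega

lemma tauP_dbl1 {m : ℕ} (hm : 2 ∣ m) (j : Fin (m / 2)) :
    tauP m hm (dbl1 hm j) = dbl hm j := by
  apply Fin.ext; rw [tauP_val]; split_ifs <;> simp only [dbl, dbl1] at * <;> omega

lemma dbl_or_dbl1 {m : ℕ} (hm : 2 ∣ m) (p : Fin m) :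
    p = dbl hm (pIdx hm p) ∨ p = dbl1 hm (pIdx hm p) := by
  rcases Nat.mod_two_eq_zero_or_one p.1 with h | h
  · left; apply Fin.ext; simp only [dbl, pIdx_val]; omega
  · right; apply Fin.ext; simp only [dbl1, pIdx_val]; omega

lemma buildP_comm {m : ℕ} (hm : 2 ∣ m) (π : Equiv.Perm (Fin (m / 2)))
    (ε : Fin (m / 2) → Bool) (p : Fin m) :
    buildP hm π ε (tauP m hm p) = tauP m hm (buildP hm π ε p) := by
  have h2 := Nat.div_mul_cancel hm
  have hlt := p.isLt
  have hππ := (π (pIdx hm p)).isLt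
  have h0 : pIdx hm (tauP m hm p) = pIdx hm p := by
    apply Fin.ext
    simp only [pIdx_val, tauP_val]
    split_ifs <;> omega
  apply Fin.ext
  rw [show buildP hm π ε (tauP m hm p) = bldF hm π ε (tauP m hm p) from rfl]
  rw [show tauP m hm (buildP hm π ε p) = tauP m hm (bldF hm π ε p) from rfl]
  rw [tauP_val, bldF_val, bldF_val, h0, tauP_val]
  cases hε : ε (pIdx hm p) <;>
    simp only [hε, Bool.false_eq_true, if_true, if_false] <;> split_ifs <;> omega

lemma buildP_dbl_val {m : ℕ} (hm : 2 ∣ m) (π : Equiv.Perm (Fin (m / 2)))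
    (ε : Fin (m / 2) → Bool) (j : Fin (m / 2)) :
    (buildP hm π ε (dbl hm j)).1 = 2 * (π j).1 + (if ε j then 1 else 0) := by
  rw [show buildP hm π ε (dbl hm j) = bldF hm π ε (dbl hm j) from rfl, bldF_val, pIdx_dbl]
  have : (dbl hm j).1 % 2 = 0 := by simp only [dbl]; omega
  rw [this]

lemma buildP_dbl1_val {m : ℕ} (hm : 2 ∣ m) (π : Equiv.Perm (Fin (m / 2)))
    (ε : Fin (m / 2) → Bool) (j : Fin (m / 2)) :
    (buildP hm π ε (dbl1 hm j)).1 = 2 * (π j).1 + (if ε j then 0 else 1) := by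
  rw [show buildP hm π ε (dbl1 hm j) = bldF hm π ε (dbl1 hm j) from rfl, bldF_val, pIdx_dbl1]
  have : (dbl1 hm j).1 % 2 = 1 := by simp only [dbl1]; omega
  rw [this]

lemma card_fiber_tau {m : ℕ} (hm : 2 ∣ m) :
    ((univ : Finset (Equiv.Perm (Fin m))).filter
        (fun σ => ∀ p, σ (tauP m hm p) = tauP m hm (σ p))).card
      = (m / 2).factorial * 2 ^ (m / 2) := by
  have key : ((univ : Finset (Equiv.Perm (Fin (m / 2)) × (Fin (m / 2) → Bool)))).card
      = ((univ : Finset (Equiv.Perm (Fin m))).filter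
        (fun σ => ∀ p, σ (tauP m hm p) = tauP m hm (σ p))).card := by
    apply Finset.card_bij (fun x _ => buildP hm x.1 x.2)
    · intro x _
      simp only [mem_filter, mem_univ, true_and]
      exact buildP_comm hm x.1 x.2
    · rintro ⟨π, ε⟩ _ ⟨π', ε'⟩ _ h
      have key : ∀ j, π j = π' j ∧ ε j = ε' j := by
        intro j
        have h1 := congrArg (fun σ : Equiv.Perm (Fin m) => (σ (dbl hm j)).1) h
        simp only [buildP_dbl_val] at h1
        cases hε : ε j <;> cases hε' : ε' j <;> rw [hε, hε'] at h1 <;>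
          simp only [if_true, if_false, Bool.false_eq_true] at h1 <;>
          first
            | exact ⟨Fin.ext (by omega), rfl⟩
            | omega
      simp only [Prod.mk.injEq]
      exact ⟨Equiv.ext fun j => (key j).1, funext fun j => (key j).2⟩
    · intro σ hσ
      simp only [mem_filter, mem_univ, true_and] at hσ
      have hinj : Function.Injective (fun j => pIdx hm (σ (dbl hm j))) := by
        intro j j' hjj
        simp only at hjj
        by_cases hq : σ (dbl hm j) = σ (dbl hm j')
        · have h2 := σ.injective hq
          apply Fin.ext
          have := congrArg Fin.val h2
          simp only [dbl] at this
          omega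
        · have e1 : (σ (dbl hm j)).1 / 2 = (σ (dbl hm j')).1 / 2 := by
            have := congrArg Fin.val hjj
            simpa only [pIdx_val] using this
          have hne : (σ (dbl hm j)).1 ≠ (σ (dbl hm j')).1 := fun hh => hq (Fin.ext hh)
          have hv : (σ (dbl hm j')).1 = (tauP m hm (σ (dbl hm j))).1 := by
            rw [tauP_val]
            split_ifs <;> omega
          have h3 : σ (dbl hm j') = σ (dbl1 hm j) := by
            rw [← tauP_dbl hm j, hσ]
            exact Fin.ext hv
          have h4 := σ.injective h3
          have := congrArg Fin.val h4
          simp only [dbl, dbl1] at this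
          omega
      refine ⟨(Equiv.ofBijective _ (Finite.injective_iff_bijective.mp hinj),
        fun j => decide ((σ (dbl hm j)).1 % 2 = 1)), mem_univ _, ?_⟩
      apply Equiv.ext
      intro p
      have hofb : ∀ j, (Equiv.ofBijective _ (Finite.injective_iff_bijective.mp hinj)) j
          = pIdx hm (σ (dbl hm j)) := fun j => rfl
      have hm2 := Nat.div_mul_cancel hm
      rcases dbl_or_dbl1 hm p with hp | hp
      · rw [hp]
        apply Fin.ext
        rw [buildP_dbl_val, hofb]
        have hlt := (σ (dbl hm (pIdx hm p))).isLt
        have hpv : (pIdx hm (σ (dbl hm (pIdx hm p)))).1 = (σ (dbl hm (pIdx hm p))).1 / 2 := rfl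
        by_cases hb : (σ (dbl hm (pIdx hm p))).1 % 2 = 1 <;> simp [hb, hpv] <;> omega
      · rw [hp]
        apply Fin.ext
        have hr : σ (dbl1 hm (pIdx hm p)) = tauP m hm (σ (dbl hm (pIdx hm p))) := by
          rw [← tauP_dbl hm, hσ]
        rw [buildP_dbl1_val, hofb, hr, tauP_val]
        have hlt := (σ (dbl hm (pIdx hm p))).isLt
        have hpv : (pIdx hm (σ (dbl hm (pIdx hm p)))).1 = (σ (dbl hm (pIdx hm p))).1 / 2 := rfl
        by_cases hb : (σ (dbl hm (pIdx hm p))).1 % 2 = 1 <;> simp [hb, hpv] <;>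
          (try split_ifs) <;> omega
  rw [← key, Finset.card_univ, Fintype.card_prod, Fintype.card_perm, Fintype.card_fun,
    Fintype.card_fin, Fintype.card_bool]

lemma exists_conj {m : ℕ} (hm : 2 ∣ m) (f : Equiv.Perm (Fin m))
    (h1 : ∀ i, f (f i) = i) (h2 : ∀ i, f i ≠ i) :
    ∃ c : Equiv.Perm (Fin m), c * tauP m hm * c⁻¹ = f := by
  by_cases hf : f = 1
  · have hempty : IsEmpty (Fin m) := ⟨fun p => h2 p (by rw [hf]; rfl)⟩
    exact ⟨1, by ext p; exact hempty.elim p⟩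
  · have hf2 : f ^ 2 = 1 := by
      ext i
      simp [pow_succ, Equiv.Perm.mul_apply, h1 i]
    have horder : orderOf f = 2 := orderOf_eq_prime hf2 hf
    have hne : Nonempty (Fin m) := by
      rcases isEmpty_or_nonempty (Fin m) with he | hne
      · exact absurd (Equiv.ext fun i => he.elim i) hf
      · exact hne
    have htne : tauP m hm ≠ 1 := by
      intro h
      obtain ⟨p⟩ := hne
      exact tauP_ne hm p (by rw [h]; rfl)
    have ht2 : (tauP m hm) ^ 2 = 1 := by
      ext p
      simp [pow_succ, Equiv.Perm.mul_apply, tauP_invol hm p]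
    have horder' : orderOf (tauP m hm) = 2 := orderOf_eq_prime ht2 htne
    obtain ⟨a, ha⟩ := Equiv.Perm.cycleType_prime_order
      (by rw [horder]; exact Nat.prime_two : (orderOf f).Prime)
    obtain ⟨b, hb⟩ := Equiv.Perm.cycleType_prime_order
      (by rw [horder']; exact Nat.prime_two : (orderOf (tauP m hm)).Prime)
    have hsf : f.support = univ :=
      Finset.eq_univ_iff_forall.2 fun i => Equiv.Perm.mem_support.2 (h2 i)
    have hst : (tauP m hm).support = univ :=
      Finset.eq_univ_iff_forall.2 fun p => Equiv.Perm.mem_support.2 (tauP_ne hm p)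
    have hsum1 := Equiv.Perm.sum_cycleType f
    have hsum2 := Equiv.Perm.sum_cycleType (tauP m hm)
    rw [ha, horder] at hsum1
    rw [hb, horder'] at hsum2
    rw [hsf, Finset.card_univ, Fintype.card_fin] at hsum1
    rw [hst, Finset.card_univ, Fintype.card_fin] at hsum2
    simp only [Multiset.sum_replicate, smul_eq_mul] at hsum1 hsum2
    have hab : a = b := by omega
    have hconj : IsConj (tauP m hm) f :=
      Equiv.Perm.isConj_of_cycleType_eq (by rw [ha, hb, horder, horder', hab])
    obtain ⟨c, hc⟩ := hconj
    exact ⟨c, mul_inv_eq_iff_eq_mul.mpr hc⟩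

lemma conj_fpf_invol {m : ℕ} (hm : 2 ∣ m) (σ : Equiv.Perm (Fin m)) :
    (∀ i, (σ * tauP m hm * σ⁻¹) ((σ * tauP m hm * σ⁻¹) i) = i)
      ∧ ∀ i, (σ * tauP m hm * σ⁻¹) i ≠ i := by
  have happ : ∀ i, (σ * tauP m hm * σ⁻¹) i = σ (tauP m hm (σ⁻¹ i)) := by
    intro i; simp [Equiv.Perm.mul_apply]
  constructor
  · intro i
    rw [happ, happ, show ∀ x, σ⁻¹ (σ x) = x from σ.symm_apply_apply, tauP_invol,
      show ∀ x, σ (σ⁻¹ x) = x from σ.apply_symm_apply]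
  · intro i h
    rw [happ] at h
    have : tauP m hm (σ⁻¹ i) = σ⁻¹ i := by
      apply σ.injective
      rw [h, show ∀ x, σ (σ⁻¹ x) = x from σ.apply_symm_apply]
    exact tauP_ne hm (σ⁻¹ i) this

lemma card_fiber {m : ℕ} (hm : 2 ∣ m) (f : Equiv.Perm (Fin m))
    (h1 : ∀ i, f (f i) = i) (h2 : ∀ i, f i ≠ i) :
    ((univ : Finset (Equiv.Perm (Fin m))).filter
      (fun σ => σ * tauP m hm * σ⁻¹ = f)).card = (m / 2).factorial * 2 ^ (m / 2) := by
  classical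
  obtain ⟨c, hc⟩ := exists_conj hm f h1 h2
  have hiff : ∀ σ : Equiv.Perm (Fin m),
      (σ * tauP m hm * σ⁻¹ = tauP m hm) ↔ ∀ p, σ (tauP m hm p) = tauP m hm (σ p) := by
    intro σ
    rw [mul_inv_eq_iff_eq_mul, Equiv.ext_iff]
    exact forall_congr' fun p => by simp [Equiv.Perm.mul_apply]
  have step : ((univ : Finset (Equiv.Perm (Fin m))).filter
      (fun σ => σ * tauP m hm * σ⁻¹ = f)).card
      = ((univ : Finset (Equiv.Perm (Fin m))).filter
      (fun σ => σ * tauP m hm * σ⁻¹ = tauP m hm)).card := by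
    apply Finset.card_bij (fun σ _ => c⁻¹ * σ)
    · intro σ hσ
      simp only [mem_filter, mem_univ, true_and] at hσ ⊢
      have heq : σ * tauP m hm * σ⁻¹ = c * tauP m hm * c⁻¹ := hσ.trans hc.symm
      calc c⁻¹ * σ * tauP m hm * (c⁻¹ * σ)⁻¹
          = c⁻¹ * (σ * tauP m hm * σ⁻¹) * c := by group
        _ = c⁻¹ * (c * tauP m hm * c⁻¹) * c := by rw [heq]
        _ = tauP m hm := by group
    · intro a _ b _ h
      exact mul_left_cancel h
    · intro σ' hσ'
      simp only [mem_filter, mem_univ, true_and] at hσ'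
      refine ⟨c * σ', ?_, by group⟩
      simp only [mem_filter, mem_univ, true_and]
      calc c * σ' * tauP m hm * (c * σ')⁻¹
          = c * (σ' * tauP m hm * σ'⁻¹) * c⁻¹ := by group
        _ = c * tauP m hm * c⁻¹ := by rw [hσ']
        _ = f := hc
  rw [step]
  rw [show ((univ : Finset (Equiv.Perm (Fin m))).filter
      (fun σ => σ * tauP m hm * σ⁻¹ = tauP m hm))
    = ((univ : Finset (Equiv.Perm (Fin m))).filter
      (fun σ => ∀ p, σ (tauP m hm p) = tauP m hm (σ p))) from
    Finset.filter_congr fun σ _ => by rw [hiff]]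
  exact card_fiber_tau hm

lemma haf_eq_count {m : ℕ} (hm : 2 ∣ m) (B : Matrix (Fin m) (Fin m) ℝ)
    (hsym : ∀ i j, B i j = B j i) (h01 : ∀ i j, B i j = 0 ∨ B i j = 1) :
    haf B = (((univ : Finset (Equiv.Perm (Fin m))).filter
      (fun f => (∀ i, f (f i) = i) ∧ (∀ i, f i ≠ i) ∧ ∀ i, B i (f i) = 1)).card : ℝ) := by
  classical
  set w' : Equiv.Perm (Fin m) → ℝ :=
    fun f => if (∀ i, B i (f i) = 1) then 1 else 0 with hw'
  have hterm : ∀ σ : Equiv.Perm (Fin m),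
      (∏ j : Fin (m / 2), B (σ (dbl hm j)) (σ (dbl1 hm j)))
        = w' (σ * tauP m hm * σ⁻¹) := by
    intro σ
    have happ : ∀ p, (σ * tauP m hm * σ⁻¹) (σ p) = σ (tauP m hm p) := by
      intro p
      simp [Equiv.Perm.mul_apply]
    have hiff : (∀ j : Fin (m / 2), B (σ (dbl hm j)) (σ (dbl1 hm j)) = 1)
        ↔ (∀ i, B i ((σ * tauP m hm * σ⁻¹) i) = 1) := by
      constructor
      · intro h i
        have hi : i = σ (σ⁻¹ i) := (σ.apply_symm_apply i).symm
        rcases dbl_or_dbl1 hm (σ⁻¹ i) with hp | hp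
        · rw [hi, happ]
          conv_lhs => rw [hp]
          rw [hp, tauP_dbl]
          exact h _
        · rw [hi, happ]
          conv_lhs => rw [hp]
          rw [hp, tauP_dbl1, hsym]
          exact h _
      · intro h j
        have := h (σ (dbl hm j))
        rwa [happ, tauP_dbl] at this
    by_cases hall : ∀ j : Fin (m / 2), B (σ (dbl hm j)) (σ (dbl1 hm j)) = 1
    · rw [Finset.prod_eq_one (fun j _ => hall j), hw']
      simp only
      rw [if_pos (hiff.mp hall)]
    · push_neg at hall
      obtain ⟨j, hj⟩ := hall
      have hz : B (σ (dbl hm j)) (σ (dbl1 hm j)) = 0 := (h01 _ _).resolve_right hj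
      rw [Finset.prod_eq_zero (Finset.mem_univ j) hz, hw']
      simp only
      rw [if_neg fun hc => hj (hiff.mpr hc j)]
  have main : haf B = (((m / 2).factorial * 2 ^ (m / 2) : ℕ) : ℝ)⁻¹
      * ∑ σ : Equiv.Perm (Fin m), w' (σ * tauP m hm * σ⁻¹) := by
    rw [haf, dif_pos hm]
    congr 1
    exact Finset.sum_congr rfl fun σ _ => hterm σ
  rw [main]
  have fib : ∑ σ : Equiv.Perm (Fin m), w' (σ * tauP m hm * σ⁻¹)
      = ∑ y : Equiv.Perm (Fin m),
          ∑ σ ∈ (univ : Finset (Equiv.Perm (Fin m))).filter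
            (fun σ => σ * tauP m hm * σ⁻¹ = y), w' (σ * tauP m hm * σ⁻¹) :=
    (Finset.sum_fiberwise_of_maps_to (fun σ _ => Finset.mem_univ _) _).symm
  rw [fib]
  have inner : ∀ y : Equiv.Perm (Fin m),
      (∑ σ ∈ (univ : Finset (Equiv.Perm (Fin m))).filter
        (fun σ => σ * tauP m hm * σ⁻¹ = y), w' (σ * tauP m hm * σ⁻¹))
      = (if (∀ i, y (y i) = i) ∧ (∀ i, y i ≠ i)
          then ((m / 2).factorial * 2 ^ (m / 2) : ℕ) * w' y else 0) := by
    intro y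
    by_cases hy : (∀ i, y (y i) = i) ∧ (∀ i, y i ≠ i)
    · rw [if_pos hy]
      rw [Finset.sum_congr rfl (fun σ hσ => by
        rw [(Finset.mem_filter.mp hσ).2])]
      rw [Finset.sum_const, card_fiber hm y hy.1 hy.2, nsmul_eq_mul]
      try push_cast
      try ring
    · rw [if_neg hy]
      have : (univ : Finset (Equiv.Perm (Fin m))).filter
          (fun σ => σ * tauP m hm * σ⁻¹ = y) = ∅ := by
        apply Finset.filter_eq_empty_iff.mpr
        intro σ _ h
        exact hy (h ▸ conj_fpf_invol hm σ)
      rw [this, Finset.sum_empty]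
  rw [Finset.sum_congr rfl fun y _ => inner y]
  rw [Finset.sum_ite, Finset.sum_const_zero, add_zero, ← Finset.mul_sum]
  have hc0 : (((m / 2).factorial * 2 ^ (m / 2) : ℕ) : ℝ) ≠ 0 := by
    positivity
  rw [inv_mul_cancel_left₀ hc0]
  rw [hw']
  simp only
  rw [Finset.sum_boole]
  rw [Finset.filter_filter]
  norm_cast
  apply congrArg Finset.card
  apply Finset.filter_congr
  intro f _
  simp [and_assoc]

open Fin.CommRing

lemma fin_add_one_val {n' : ℕ} (x : Fin (n' + 2)) :
    (x + 1).val = if x.val + 1 = n' + 2 then 0 else x.val + 1 := by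
  rw [Fin.val_add, Fin.val_one]
  split_ifs with h
  · rw [h, Nat.mod_self]
  · exact Nat.mod_eq_of_lt (by have := x.isLt; omega)

lemma fin_sub_one_val {n' : ℕ} (x : Fin (n' + 2)) :
    (x - 1).val = if x.val = 0 then n' + 1 else x.val - 1 := by
  rw [Fin.sub_def]
  show (n' + 2 - 1 + x.val) % (n' + 2) = _
  split_ifs with h
  · rw [h, add_zero]
    exact Nat.mod_eq_of_lt (by omega)
  · rw [show n' + 2 - 1 + x.val = (x.val - 1) + (n' + 2) by omega, Nat.add_mod_right]
    exact Nat.mod_eq_of_lt (by have := x.isLt; omega)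

lemma fin_two_ne_zero {n' : ℕ} (hn : 2 ≤ n') : (2 : Fin (n' + 2)) ≠ 0 := by
  intro h
  have h2 : ((1 : Fin (n' + 2)) + 1).val = 2 := by
    rw [fin_add_one_val, Fin.val_one]
    split_ifs with h' <;> omega
  rw [one_add_one_eq_two, h] at h2
  simp at h2

lemma cg_adj_iff {n' : ℕ} (x y : Fin (n' + 2)) :
    (SimpleGraph.cycleGraph (n' + 2)).Adj x y ↔ y = x + 1 ∨ y = x - 1 := by
  rw [SimpleGraph.cycleGraph_adj]
  constructor
  · rintro (h | h)
    · right; linear_combination -h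
    · left; linear_combination h
  · rintro (h | h)
    · right; linear_combination h
    · left; linear_combination -h

section Transfer
variable {N : ℕ} (S : Finset (Fin N))

lemma e_mem (i : Fin S.card) : S.orderEmbOfFin rfl i ∈ S :=
  Finset.orderEmbOfFin_mem S rfl i

lemma e_surj {x : Fin N} (hx : x ∈ S) : ∃ i, S.orderEmbOfFin rfl i = x := by
  have hr := Finset.range_orderEmbOfFin S (rfl : S.card = S.card)
  have hx' : x ∈ (S : Set (Fin N)) := hx
  rw [← hr] at hx'
  exact hx'

/-- Lift a permutation of the index set to a function on `Fin N`. -/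
noncomputable def Fof (f : Equiv.Perm (Fin S.card)) : Fin N → Fin N := fun x =>
  if hx : x ∈ S then ((S.orderIsoOfFin rfl) (f ((S.orderIsoOfFin rfl).symm ⟨x, hx⟩)) : Fin N)
  else x

lemma Fof_e (f : Equiv.Perm (Fin S.card)) (i : Fin S.card) :
    Fof S f (S.orderEmbOfFin rfl i) = S.orderEmbOfFin rfl (f i) := by
  rw [Fof, dif_pos (e_mem S i)]
  have h1 : (⟨S.orderEmbOfFin rfl i, e_mem S i⟩ : {x // x ∈ S}) = (S.orderIsoOfFin rfl) i :=
    Subtype.ext (Finset.coe_orderIsoOfFin_apply S rfl i).symm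
  rw [h1, OrderIso.symm_apply_apply]
  exact Finset.coe_orderIsoOfFin_apply S rfl (f i)

lemma Fof_eq_of (f g : Equiv.Perm (Fin S.card))
    (h : ∀ x ∈ S, Fof S f x = Fof S g x) : f = g := by
  apply Equiv.ext
  intro i
  have := h _ (e_mem S i)
  rw [Fof_e, Fof_e] at this
  exact (S.orderEmbOfFin rfl).injective this

lemma iso_coe (j : Fin S.card) :
    ((S.orderIsoOfFin rfl) j : Fin N) = S.orderEmbOfFin rfl j :=
  Finset.coe_orderIsoOfFin_apply S rfl j

lemma e_iso_symm (y : {x // x ∈ S}) :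
    S.orderEmbOfFin rfl ((S.orderIsoOfFin rfl).symm y) = (y : Fin N) := by
  rw [← iso_coe, OrderIso.apply_symm_apply]

/-- Build a permutation of the index set from an involution of `S`. -/
noncomputable def pOf (G : Fin N → Fin N) (hmem : ∀ x ∈ S, G x ∈ S)
    (hinv : ∀ x ∈ S, G (G x) = x) : Equiv.Perm (Fin S.card) :=
  Function.Involutive.toPerm
    (fun i => (S.orderIsoOfFin rfl).symm ⟨G (S.orderEmbOfFin rfl i), hmem _ (e_mem S i)⟩)
    (by
      intro i
      simp only
      apply (S.orderIsoOfFin rfl).injective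
      rw [OrderIso.apply_symm_apply]
      apply Subtype.ext
      rw [iso_coe]
      show G ((S.orderEmbOfFin rfl) ((S.orderIsoOfFin rfl).symm
        ⟨G ((S.orderEmbOfFin rfl) i), hmem _ (e_mem S i)⟩)) = (S.orderEmbOfFin rfl) i
      rw [e_iso_symm]
      exact hinv _ (e_mem S i))

lemma e_pOf (G : Fin N → Fin N) (hmem : ∀ x ∈ S, G x ∈ S)
    (hinv : ∀ x ∈ S, G (G x) = x) (i : Fin S.card) :
    S.orderEmbOfFin rfl (pOf S G hmem hinv i) = G (S.orderEmbOfFin rfl i) := by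
  show S.orderEmbOfFin rfl ((S.orderIsoOfFin rfl).symm
    ⟨G (S.orderEmbOfFin rfl i), hmem _ (e_mem S i)⟩) = _
  rw [e_iso_symm]

end Transfer

lemma fin_one_ne_zero {n' : ℕ} : (1 : Fin (n' + 2)) ≠ 0 := by
  intro h
  have := congrArg Fin.val h
  simp [Fin.val_one] at this

lemma dgap_ex {n' : ℕ} (S : Finset (Fin (n' + 2))) {z : Fin (n' + 2)} (hz : z ∉ S)
    (x : Fin (n' + 2)) : ∃ t : ℕ, x ∉ S ∨ x - ((t + 1 : ℕ) : Fin (n' + 2)) ∉ S := by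
  by_cases hx : x ∈ S
  · refine ⟨(x - z).val - 1, Or.inr ?_⟩
    have hxz : x ≠ z := fun h => hz (h ▸ hx)
    have hsub : (x - z) ≠ 0 := sub_ne_zero.mpr hxz
    have hval : 1 ≤ (x - z).val := by
      rcases Nat.eq_zero_or_pos (x - z).val with h0 | h0
      · exact absurd (Fin.ext (by simp [h0])) hsub
      · omega
    rw [show (x - z).val - 1 + 1 = (x - z).val by omega, Fin.cast_val_eq_self, sub_sub_cancel]
    exact hz
  · exact ⟨0, Or.inl hx⟩

lemma forced_proper {n' : ℕ} (hn : 2 ≤ n') (S : Finset (Fin (n' + 2)))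
    {z : Fin (n' + 2)} (hz : z ∉ S) (F : Fin (n' + 2) → Fin (n' + 2))
    (hmem : ∀ x ∈ S, F x ∈ S) (hinv : ∀ x ∈ S, F (F x) = x)
    (hadj : ∀ x ∈ S, F x = x + 1 ∨ F x = x - 1) :
    ∀ x ∈ S, F x = if (Nat.find (dgap_ex S hz x)) % 2 = 0 then x + 1 else x - 1 := by
  have hd1 : ∀ x ∈ S, x - ((Nat.find (dgap_ex S hz x) + 1 : ℕ) : Fin (n' + 2)) ∉ S :=
    fun x hx => (Nat.find_spec (dgap_ex S hz x)).resolve_left (not_not_intro hx)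
  have hd2 : ∀ x ∈ S, ∀ t, t < Nat.find (dgap_ex S hz x) →
      x - ((t + 1 : ℕ) : Fin (n' + 2)) ∈ S := by
    intro x hx t ht
    have := Nat.find_min (dgap_ex S hz x) ht
    push_neg at this
    exact this.2
  have main : ∀ k, ∀ x, x ∈ S → Nat.find (dgap_ex S hz x) = k →
      F x = if k % 2 = 0 then x + 1 else x - 1 := by
    intro k
    induction k using Nat.strong_induction_on with
    | _ k IH =>
      intro x hx hdx
      match k, hdx with
      | 0, hdx =>
        rw [if_pos (by norm_num)]
        have hgap : x - ((0 + 1 : ℕ) : Fin (n' + 2)) ∉ S := by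
          rw [← hdx]; exact hd1 x hx
        have hgap' : x - 1 ∉ S := by
          rwa [show ((0 + 1 : ℕ) : Fin (n' + 2)) = 1 by norm_num] at hgap
        rcases hadj x hx with h | h
        · exact h
        · exact absurd (h ▸ hmem x hx) hgap'
      | (k' + 1), hdx =>
        have hx1 : x - 1 ∈ S := by
          have := hd2 x hx 0 (by omega)
          rwa [show ((0 + 1 : ℕ) : Fin (n' + 2)) = 1 by norm_num] at this
        have hd1x : Nat.find (dgap_ex S hz (x - 1)) = k' := by
          rw [Nat.find_eq_iff]
          constructor
          · right
            have hthis := hd1 x hx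
            rw [hdx] at hthis
            rw [show (x - 1) - ((k' + 1 : ℕ) : Fin (n' + 2))
              = x - ((k' + 1 + 1 : ℕ) : Fin (n' + 2)) by push_cast; ring]
            exact hthis
          · intro j hj
            push_neg
            refine ⟨hx1, ?_⟩
            have hthis := hd2 x hx (j + 1) (by omega)
            rwa [show x - ((j + 1 + 1 : ℕ) : Fin (n' + 2))
              = (x - 1) - ((j + 1 : ℕ) : Fin (n' + 2)) by push_cast; ring] at hthis
        have hF1 := IH k' (by omega) (x - 1) hx1 hd1x
        by_cases hk : k' % 2 = 0
        · rw [if_neg (by omega)]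
          rw [if_pos hk] at hF1
          have hFx1 : F (x - 1) = x := by rw [hF1]; ring
          have hthis := hinv (x - 1) hx1
          rwa [hFx1] at hthis
        · rw [if_pos (by omega)]
          rw [if_neg hk] at hF1
          rcases hadj x hx with h | h
          · exact h
          · exfalso
            have h2 := hinv x hx
            rw [h, hF1] at h2
            exact fin_two_ne_zero hn (by linear_combination -h2)
  intro x hx
  exact main _ x hx rfl

lemma step_up {n' : ℕ} (hn : 2 ≤ n') (F : Fin (n' + 2) → Fin (n' + 2))
    (hinv : ∀ x, F (F x) = x) (hadj : ∀ x, F x = x + 1 ∨ F x = x - 1) (x : Fin (n' + 2)) :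
    (F x = x + 1 → F (x + 1) = x) ∧ (F x = x - 1 → F (x + 1) = x + 1 + 1) := by
  constructor
  · intro h
    have h2 := hinv x
    rwa [h] at h2
  · intro h
    rcases hadj (x + 1) with h1 | h1
    · exact h1
    · exfalso
      have hx : F (x + 1) = x := by rw [h1]; ring
      have h2 := hinv (x + 1)
      rw [hx, h] at h2
      exact fin_two_ne_zero hn (by linear_combination -h2)

lemma univ_forced {n' : ℕ} (hn : 2 ≤ n') (F G : Fin (n' + 2) → Fin (n' + 2))
    (hFinv : ∀ x, F (F x) = x) (hFadj : ∀ x, F x = x + 1 ∨ F x = x - 1)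
    (hGinv : ∀ x, G (G x) = x) (hGadj : ∀ x, G x = x + 1 ∨ G x = x - 1)
    (h0 : F 0 = G 0) : F = G := by
  have key : ∀ t : ℕ, F ((t : ℕ) : Fin (n' + 2)) = G ((t : ℕ) : Fin (n' + 2)) := by
    intro t
    induction t with
    | zero => simpa using h0
    | succ t IH =>
      have hc : ((t + 1 : ℕ) : Fin (n' + 2)) = ((t : ℕ) : Fin (n' + 2)) + 1 := by
        push_cast; ring
      rw [hc]
      rcases hFadj ((t : ℕ) : Fin (n' + 2)) with h | h
      · have hF := (step_up hn F hFinv hFadj _).1 h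
        have hG := (step_up hn G hGinv hGadj _).1 (by rw [← IH]; exact h)
        rw [hF, hG]
      · have hF := (step_up hn F hFinv hFadj _).2 h
        have hG := (step_up hn G hGinv hGadj _).2 (by rw [← IH]; exact h)
        rw [hF, hG]
  funext x
  have hx := key x.val
  rwa [Fin.cast_val_eq_self] at hx

def G1 {n' : ℕ} : Fin (n' + 2) → Fin (n' + 2) := fun x =>
  if x.val % 2 = 0 then x + 1 else x - 1

def G2 {n' : ℕ} : Fin (n' + 2) → Fin (n' + 2) := fun x =>
  if x.val % 2 = 0 then x - 1 else x + 1

lemma G1_adj {n' : ℕ} (x : Fin (n' + 2)) : G1 x = x + 1 ∨ G1 x = x - 1 := by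
  rw [G1]; split_ifs <;> simp

lemma G2_adj {n' : ℕ} (x : Fin (n' + 2)) : G2 x = x + 1 ∨ G2 x = x - 1 := by
  rw [G2]; split_ifs <;> simp

lemma G1_inv {n' : ℕ} (hN : 2 ∣ (n' + 2)) (x : Fin (n' + 2)) : G1 (G1 x) = x := by
  have hlt := x.isLt
  rw [G1, G1]
  split_ifs with h1 h2 h2
  · exfalso
    rw [fin_add_one_val] at h2
    split_ifs at h2 <;> omega
  · ring
  · ring
  · exfalso
    rw [fin_sub_one_val] at h2
    split_ifs at h2 <;> omega

lemma G2_inv {n' : ℕ} (hN : 2 ∣ (n' + 2)) (x : Fin (n' + 2)) : G2 (G2 x) = x := by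
  have hlt := x.isLt
  rw [G2, G2]
  split_ifs with h1 h2 h2
  · exfalso
    rw [fin_sub_one_val] at h2
    split_ifs at h2 <;> omega
  · ring
  · ring
  · exfalso
    rw [fin_add_one_val] at h2
    split_ifs at h2 <;> omega

lemma G1_zero {n' : ℕ} : G1 (0 : Fin (n' + 2)) = 0 + 1 := by
  rw [G1, if_pos]; simp

lemma G2_zero {n' : ℕ} : G2 (0 : Fin (n' + 2)) = 0 - 1 := by
  rw [G2, if_pos]; simp

lemma add_one_ne_sub_one {n' : ℕ} (hn : 2 ≤ n') (x : Fin (n' + 2)) : x + 1 ≠ x - 1 := by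
  intro h
  exact fin_two_ne_zero hn (by linear_combination h)

lemma add_one_ne_self {n' : ℕ} (x : Fin (n' + 2)) : x + 1 ≠ x := by
  intro h
  exact fin_one_ne_zero (by linear_combination h)

lemma sub_one_ne_self {n' : ℕ} (x : Fin (n' + 2)) : x - 1 ≠ x := by
  intro h
  exact fin_one_ne_zero (by linear_combination -h)

lemma B_eq_one_iff {n' : ℕ} (S : Finset (Fin (n' + 2))) (i j : Fin S.card) :
    subm ((SimpleGraph.cycleGraph (n' + 2)).adjMatrix ℝ) S i j = 1 ↔
      (S.orderEmbOfFin rfl j = S.orderEmbOfFin rfl i + 1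
        ∨ S.orderEmbOfFin rfl j = S.orderEmbOfFin rfl i - 1) := by
  rw [show subm ((SimpleGraph.cycleGraph (n' + 2)).adjMatrix ℝ) S i j
    = ((SimpleGraph.cycleGraph (n' + 2)).adjMatrix ℝ)
        (S.orderEmbOfFin rfl i) (S.orderEmbOfFin rfl j) from rfl]
  rw [SimpleGraph.adjMatrix_apply]
  split_ifs with h
  · exact iff_of_true rfl ((cg_adj_iff _ _).mp h)
  · exact iff_of_false (by norm_num) (fun hc => h ((cg_adj_iff _ _).mpr hc))

lemma Fof_props {n' : ℕ} (S : Finset (Fin (n' + 2))) (f : Equiv.Perm (Fin S.card))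
    (hf : f ∈ (univ : Finset (Equiv.Perm (Fin S.card))).filter
      (fun f => (∀ i, f (f i) = i) ∧ (∀ i, f i ≠ i) ∧
        ∀ i, subm ((SimpleGraph.cycleGraph (n' + 2)).adjMatrix ℝ) S i (f i) = 1)) :
    (∀ x ∈ S, Fof S f x ∈ S) ∧ (∀ x ∈ S, Fof S f (Fof S f x) = x)
      ∧ (∀ x ∈ S, Fof S f x = x + 1 ∨ Fof S f x = x - 1) := by
  obtain ⟨-, h1, h2, h3⟩ := Finset.mem_filter.mp hf
  refine ⟨?_, ?_, ?_⟩
  · intro x hx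
    obtain ⟨i, rfl⟩ := e_surj S hx
    rw [Fof_e]
    exact e_mem S _
  · intro x hx
    obtain ⟨i, rfl⟩ := e_surj S hx
    rw [Fof_e, Fof_e, h1]
  · intro x hx
    obtain ⟨i, rfl⟩ := e_surj S hx
    rw [Fof_e]
    exact (B_eq_one_iff S i (f i)).mp (h3 i)

lemma Fof_pOf {n' : ℕ} (S : Finset (Fin (n' + 2))) (G : Fin (n' + 2) → Fin (n' + 2))
    (hmem : ∀ x ∈ S, G x ∈ S) (hinv : ∀ x ∈ S, G (G x) = x) :
    ∀ x ∈ S, Fof S (pOf S G hmem hinv) x = G x := by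
  intro x hx
  obtain ⟨i, rfl⟩ := e_surj S hx
  rw [Fof_e, e_pOf]

lemma count_le_one {n' : ℕ} (hn : 2 ≤ n') (S : Finset (Fin (n' + 2)))
    (hS : S ≠ univ) :
    ((univ : Finset (Equiv.Perm (Fin S.card))).filter
      (fun f => (∀ i, f (f i) = i) ∧ (∀ i, f i ≠ i) ∧
        ∀ i, subm ((SimpleGraph.cycleGraph (n' + 2)).adjMatrix ℝ) S i (f i) = 1)).card ≤ 1 := by
  rw [Finset.card_le_one]
  intro f hf g hg
  obtain ⟨z, hz⟩ : ∃ z, z ∉ S := by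
    by_contra h
    push_neg at h
    exact hS (Finset.eq_univ_iff_forall.mpr h)
  obtain ⟨hf1, hf2, hf3⟩ := Fof_props S f hf
  obtain ⟨hg1, hg2, hg3⟩ := Fof_props S g hg
  apply Fof_eq_of
  intro x hx
  rw [forced_proper hn S hz (Fof S f) hf1 hf2 hf3 x hx,
    forced_proper hn S hz (Fof S g) hg1 hg2 hg3 x hx]

lemma count_univ {n' : ℕ} (hn : 2 ≤ n') (hN : 2 ∣ (n' + 2)) :
    ((univ : Finset (Equiv.Perm (Fin (univ : Finset (Fin (n' + 2))).card))).filter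
      (fun f => (∀ i, f (f i) = i) ∧ (∀ i, f i ≠ i) ∧
        ∀ i, subm ((SimpleGraph.cycleGraph (n' + 2)).adjMatrix ℝ)
          (univ : Finset (Fin (n' + 2))) i (f i) = 1)).card = 2 := by
  set S : Finset (Fin (n' + 2)) := univ with hSdef
  have hmem1 : ∀ x ∈ S, G1 x ∈ S := fun x _ => Finset.mem_univ _
  have hmem2 : ∀ x ∈ S, G2 x ∈ S := fun x _ => Finset.mem_univ _
  have hinv1 : ∀ x ∈ S, G1 (G1 x) = x := fun x _ => G1_inv hN x
  have hinv2 : ∀ x ∈ S, G2 (G2 x) = x := fun x _ => G2_inv hN x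
  set f₁ := pOf S G1 hmem1 hinv1 with hf₁
  set f₂ := pOf S G2 hmem2 hinv2 with hf₂
  have hG1ne : ∀ x : Fin (n' + 2), G1 x ≠ x := by
    intro x
    rcases G1_adj x with h | h <;> rw [h]
    · exact add_one_ne_self x
    · exact sub_one_ne_self x
  have hG2ne : ∀ x : Fin (n' + 2), G2 x ≠ x := by
    intro x
    rcases G2_adj x with h | h <;> rw [h]
    · exact add_one_ne_self x
    · exact sub_one_ne_self x
  have hmemf : ∀ (G : Fin (n' + 2) → Fin (n' + 2)) (hm : ∀ x ∈ S, G x ∈ S)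
      (hi : ∀ x ∈ S, G (G x) = x) (hne : ∀ x, G x ≠ x)
      (hadj : ∀ x, G x = x + 1 ∨ G x = x - 1),
      pOf S G hm hi ∈ (univ : Finset (Equiv.Perm (Fin S.card))).filter
        (fun f => (∀ i, f (f i) = i) ∧ (∀ i, f i ≠ i) ∧
          ∀ i, subm ((SimpleGraph.cycleGraph (n' + 2)).adjMatrix ℝ) S i (f i) = 1) := by
    intro G hm hi hne hadj
    rw [Finset.mem_filter]
    refine ⟨Finset.mem_univ _, ?_, ?_, ?_⟩
    · intro i
      apply (S.orderEmbOfFin rfl).injective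
      rw [e_pOf, e_pOf]
      exact hi _ (e_mem S i)
    · intro i h
      have := congrArg (S.orderEmbOfFin rfl) h
      rw [e_pOf] at this
      exact hne _ this
    · intro i
      rw [B_eq_one_iff, e_pOf]
      exact hadj _
  have hsub : ((univ : Finset (Equiv.Perm (Fin S.card))).filter
      (fun f => (∀ i, f (f i) = i) ∧ (∀ i, f i ≠ i) ∧
        ∀ i, subm ((SimpleGraph.cycleGraph (n' + 2)).adjMatrix ℝ) S i (f i) = 1))
      = {f₁, f₂} := by
    apply Finset.Subset.antisymm
    · intro f hf
      obtain ⟨h1, h2, h3⟩ := Fof_props S f hf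
      have h1' : ∀ x, Fof S f (Fof S f x) = x := fun x => h2 x (Finset.mem_univ x)
      have h3' : ∀ x, Fof S f x = x + 1 ∨ Fof S f x = x - 1 :=
        fun x => h3 x (Finset.mem_univ x)
      simp only [Finset.mem_insert, Finset.mem_singleton]
      rcases h3' 0 with h0 | h0
      · left
        apply Fof_eq_of
        intro x hx
        rw [Fof_pOf S G1 hmem1 hinv1 x hx]
        rw [univ_forced hn (Fof S f) G1 h1' h3' (fun x => G1_inv hN x) G1_adj
          (by rw [h0, G1_zero])]
      · right
        apply Fof_eq_of
        intro x hx
        rw [Fof_pOf S G2 hmem2 hinv2 x hx]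
        rw [univ_forced hn (Fof S f) G2 h1' h3' (fun x => G2_inv hN x) G2_adj
          (by rw [h0, G2_zero])]
    · intro f hf
      simp only [Finset.mem_insert, Finset.mem_singleton] at hf
      rcases hf with rfl | rfl
      · exact hmemf G1 hmem1 hinv1 hG1ne G1_adj
      · exact hmemf G2 hmem2 hinv2 hG2ne G2_adj
  rw [hsub]
  apply Finset.card_pair
  intro h
  obtain ⟨i₀, hi₀⟩ := e_surj S (Finset.mem_univ (0 : Fin (n' + 2)))
  have h1 : S.orderEmbOfFin rfl (f₁ i₀) = 0 + 1 := by
    rw [hf₁, e_pOf, hi₀, G1_zero]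
  have h2 : S.orderEmbOfFin rfl (f₂ i₀) = 0 - 1 := by
    rw [hf₂, e_pOf, hi₀, G2_zero]
  rw [h] at h1
  rw [h1] at h2
  exact add_one_ne_sub_one hn 0 h2

end Aux

/-- For an even cycle `C_n`, `GBS_{C_n}(x) = μ_{C_n}(x) + 2(−1)^{n/2}`. -/
theorem gbs_cycle_even {n : ℕ} (hn : 4 ≤ n) (he : Even n) :
    GBS ((SimpleGraph.cycleGraph n).adjMatrix ℝ) =
      matchPoly ((SimpleGraph.cycleGraph n).adjMatrix ℝ) +
        Polynomial.C (2 * (-1 : ℝ) ^ (n / 2)) := by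
  obtain ⟨n', rfl⟩ : ∃ n', n = n' + 2 := ⟨n - 2, by omega⟩
  have hn' : 2 ≤ n' := by omega
  have hN : 2 ∣ (n' + 2) := he.two_dvd
  have hsym : ∀ S : Finset (Fin (n' + 2)), ∀ i j,
      subm ((SimpleGraph.cycleGraph (n' + 2)).adjMatrix ℝ) S i j
        = subm ((SimpleGraph.cycleGraph (n' + 2)).adjMatrix ℝ) S j i := by
    intro S i j
    simp only [subm, SimpleGraph.adjMatrix_apply]
    by_cases h : (SimpleGraph.cycleGraph (n' + 2)).Adj
        (S.orderEmbOfFin rfl i) (S.orderEmbOfFin rfl j)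
    · rw [if_pos h, if_pos h.symm]
    · rw [if_neg h, if_neg fun h' => h h'.symm]
  have h01 : ∀ S : Finset (Fin (n' + 2)), ∀ i j,
      subm ((SimpleGraph.cycleGraph (n' + 2)).adjMatrix ℝ) S i j = 0
        ∨ subm ((SimpleGraph.cycleGraph (n' + 2)).adjMatrix ℝ) S i j = 1 := by
    intro S i j
    simp only [subm, SimpleGraph.adjMatrix_apply]
    split_ifs <;> simp
  have hval : ∀ S : Finset (Fin (n' + 2)), S ≠ univ →
      haf (subm ((SimpleGraph.cycleGraph (n' + 2)).adjMatrix ℝ) S) ^ 2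
        = haf (subm ((SimpleGraph.cycleGraph (n' + 2)).adjMatrix ℝ) S) := by
    intro S hS
    by_cases hm : 2 ∣ S.card
    · rw [haf_eq_count hm _ (hsym S) (h01 S)]
      have hle := count_le_one hn' S hS
      rcases Nat.le_one_iff_eq_zero_or_eq_one.mp hle with h | h <;> rw [h] <;> norm_num
    · rw [haf, dif_neg hm]
      norm_num
  have hcard : (univ : Finset (Fin (n' + 2))).card = n' + 2 := by simp
  have huniv : haf (subm ((SimpleGraph.cycleGraph (n' + 2)).adjMatrix ℝ)
      (univ : Finset (Fin (n' + 2)))) = 2 := by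
    have hm : 2 ∣ (univ : Finset (Fin (n' + 2))).card := by rw [hcard]; exact hN
    rw [haf_eq_count hm _ (hsym univ) (h01 univ), count_univ hn' hN]
    norm_num
  have key : GBS ((SimpleGraph.cycleGraph (n' + 2)).adjMatrix ℝ)
      - matchPoly ((SimpleGraph.cycleGraph (n' + 2)).adjMatrix ℝ)
      = Polynomial.C (2 * (-1 : ℝ) ^ ((n' + 2) / 2)) := by
    rw [GBS, matchPoly, ← Finset.sum_sub_distrib]
    have hterm : ∀ S : Finset (Fin (n' + 2)),
        Polynomial.C ((-1 : ℝ) ^ (S.card / 2)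
            * haf (subm ((SimpleGraph.cycleGraph (n' + 2)).adjMatrix ℝ) S) ^ 2)
            * Polynomial.X ^ ((n' + 2) - S.card)
          - Polynomial.C ((-1 : ℝ) ^ (S.card / 2)
            * haf (subm ((SimpleGraph.cycleGraph (n' + 2)).adjMatrix ℝ) S))
            * Polynomial.X ^ ((n' + 2) - S.card)
        = if S = univ then Polynomial.C (2 * (-1 : ℝ) ^ ((n' + 2) / 2)) else 0 := by
      intro S
      by_cases hS : S = univ
      · rw [hS, if_pos rfl, huniv, hcard, Nat.sub_self, pow_zero, mul_one, mul_one,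
          ← Polynomial.C_sub]
        congr 1
        ring
      · rw [if_neg hS, hval S hS, sub_self]
    rw [Finset.sum_congr rfl fun S _ => hterm S]
    rw [Finset.sum_ite_eq' univ univ fun _ => Polynomial.C (2 * (-1 : ℝ) ^ ((n' + 2) / 2))]
    rw [if_pos (Finset.mem_univ _)]
  linear_combination key
end
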